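/- arXiv:2605.10205 — 6 statements merged into one kernel-verified Lean document; each statement's English description precedes it below -/
import Mathlib

section
/- Let H be a real inner product space and g : H → ℝ a differentiable function that is μ-strongly convex (μ > 0) and β-smooth (β > 0). Then for every real η with 0 ≤ η ≤ 1/β and all w, w' ∈ H, ‖(w − η∇g(w)) − (w' − η∇g(w'))‖ ≤ (1 − ημ/2)‖w − w'‖. -/
/-!
Write `d = w - w'` and `Δ = g' w - g' w'`. Strong convexity makes the gradient strongly monotone,
`μ ‖d‖² ≤ ⟪Δ, d⟫`, while convexity and the descent lemma make it co-coercive,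
`‖Δ‖² / β ≤ ⟪Δ, d⟫`. Expanding `‖d - η Δ‖²` and using both bounds with `η ≤ 1 / β` gives
`‖d - η Δ‖² ≤ (1 - η μ) ‖d‖² ≤ (1 - η μ / 2)² ‖d‖²`.
-/

open scoped RealInnerProductSpace

section GradientInequalities

variable {H : Type*} [NormedAddCommGroup H] [InnerProductSpace ℝ H] {g : H → ℝ} {g' : H → H}

theorem hasDerivAt_comp_add_smul (hdiff : ∀ x : H, HasFDerivAt g ((innerSL ℝ) (g' x)) x)
    (x v : H) (t : ℝ) : HasDerivAt (fun s : ℝ => g (x + s • v)) ⟪g' (x + t • v), v⟫ t := by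
  have hline : HasDerivAt (fun s : ℝ => x + s • v) v t := by
    simpa using ((hasDerivAt_id t).smul_const v).const_add x
  exact (hdiff (x + t • v)).comp_hasDerivAt t hline

/-- The descent lemma. -/
theorem le_add_inner_add_sq_of_lipschitz_grad {β : ℝ}
    (hdiff : ∀ x : H, HasFDerivAt g ((innerSL ℝ) (g' x)) x)
    (hsmooth : ∀ x y : H, ‖g' x - g' y‖ ≤ β * ‖x - y‖) (x y : H) :
    g y ≤ g x + ⟪g' x, y - x⟫ + β / 2 * ‖y - x‖ ^ 2 := by
  set v := y - x
  -- compare `t ↦ g (x + t • v)` on `[0, 1]` with its quadratic upper model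
  have hB (t : ℝ) : HasDerivAt (fun s : ℝ => g x + s * ⟪g' x, v⟫ + β / 2 * s ^ 2 * ‖v‖ ^ 2)
      (⟪g' x, v⟫ + β * t * ‖v‖ ^ 2) t :=
    ((((hasDerivAt_id' t).mul_const _).const_add (g x)).add
      (((hasDerivAt_pow 2 t).const_mul (β / 2)).mul_const (‖v‖ ^ 2))).congr_deriv (by ring)
  have hslope (t : ℝ) (ht : 0 ≤ t) : ⟪g' (x + t • v), v⟫ ≤ ⟪g' x, v⟫ + β * t * ‖v‖ ^ 2 := by
    have : ⟪g' (x + t • v) - g' x, v⟫ ≤ β * t * ‖v‖ ^ 2 :=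
      calc ⟪g' (x + t • v) - g' x, v⟫ ≤ ‖g' (x + t • v) - g' x‖ * ‖v‖ := real_inner_le_norm _ _
        _ ≤ β * ‖(x + t • v) - x‖ * ‖v‖ := by gcongr; exact hsmooth _ _
        _ = β * t * ‖v‖ ^ 2 := by
          rw [add_sub_cancel_left, norm_smul, Real.norm_of_nonneg ht]; ring
    rw [inner_sub_left] at this
    linarith
  have key := image_le_of_deriv_right_le_deriv_boundary
    (fun t _ => (hasDerivAt_comp_add_smul hdiff x v t).continuousAt.continuousWithinAt)
    (fun t _ => (hasDerivAt_comp_add_smul hdiff x v t).hasDerivWithinAt)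
    (by simp) (fun t _ => (hB t).continuousAt.continuousWithinAt)
    (fun t _ => (hB t).hasDerivWithinAt) (fun t ht => hslope t ht.1)
    (Set.right_mem_Icc.2 zero_le_one)
  simpa [v] using key

theorem add_inner_add_sq_norm_grad_sub_le {β : ℝ} (hβ : 0 < β)
    (hdiff : ∀ x : H, HasFDerivAt g ((innerSL ℝ) (g' x)) x)
    (hconv : ∀ x y : H, g y + ⟪g' y, x - y⟫ ≤ g x)
    (hsmooth : ∀ x y : H, ‖g' x - g' y‖ ≤ β * ‖x - y‖) (x y : H) :
    g x + ⟪g' x, y - x⟫ + 1 / (2 * β) * ‖g' y - g' x‖ ^ 2 ≤ g y := by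
  set Δ := g' y - g' x
  -- the supporting hyperplane at `x` and the quadratic upper model at `y`, both evaluated at the
  -- gradient step `z` from `y` with gradient `Δ`
  set z := y - (1 / β) • Δ
  have hlow : g x + ⟪g' x, z - x⟫ ≤ g z := hconv z x
  have hup : g z ≤ g y + ⟪g' y, z - y⟫ + β / 2 * ‖z - y‖ ^ 2 :=
    le_add_inner_add_sq_of_lipschitz_grad hdiff hsmooth y z
  have hzy : z - y = -((1 / β) • Δ) := by simp [z]
  have hzx : z - x = (y - x) - (1 / β) • Δ := by simp only [z]; abel
  have hΔ : ⟪g' y, Δ⟫ - ⟪g' x, Δ⟫ = ‖Δ‖ ^ 2 := by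
    rw [← inner_sub_left, real_inner_self_eq_norm_sq]
  rw [hzx, inner_sub_right, inner_smul_right] at hlow
  rw [hzy, inner_neg_right, inner_smul_right, norm_neg, norm_smul,
    Real.norm_of_nonneg (by positivity)] at hup
  have : 1 / β * ⟪g' y, Δ⟫ - 1 / β * ⟪g' x, Δ⟫ = 1 / β * ‖Δ‖ ^ 2 := by rw [← mul_sub, hΔ]
  have : β / 2 * (1 / β * ‖Δ‖) ^ 2 = 1 / (2 * β) * ‖Δ‖ ^ 2 := by field_simp
  have : 1 / β * ‖Δ‖ ^ 2 = 2 * (1 / (2 * β) * ‖Δ‖ ^ 2) := by field_simp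
  linarith

/-- Co-coercivity of the gradient (Baillon–Haddad). -/
theorem inv_mul_sq_norm_grad_sub_le_inner {β : ℝ} (hβ : 0 < β)
    (hdiff : ∀ x : H, HasFDerivAt g ((innerSL ℝ) (g' x)) x)
    (hconv : ∀ x y : H, g y + ⟪g' y, x - y⟫ ≤ g x)
    (hsmooth : ∀ x y : H, ‖g' x - g' y‖ ≤ β * ‖x - y‖) (x y : H) :
    1 / β * ‖g' x - g' y‖ ^ 2 ≤ ⟪g' x - g' y, x - y⟫ := by
  have hxy := add_inner_add_sq_norm_grad_sub_le hβ hdiff hconv hsmooth x y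
  have hyx := add_inner_add_sq_norm_grad_sub_le hβ hdiff hconv hsmooth y x
  rw [norm_sub_rev] at hxy
  have : ⟪g' x - g' y, x - y⟫ = -⟪g' x, y - x⟫ - ⟪g' y, x - y⟫ := by
    rw [inner_sub_left, ← inner_neg_right, neg_sub]
  have : 1 / β * ‖g' x - g' y‖ ^ 2 = 2 * (1 / (2 * β) * ‖g' x - g' y‖ ^ 2) := by field_simp
  linarith

theorem mul_sq_norm_sub_le_inner_grad_sub {μ : ℝ}
    (hsconv : ∀ x y : H, g y + ⟪g' y, x - y⟫ + μ / 2 * ‖x - y‖ ^ 2 ≤ g x) (x y : H) :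
    μ * ‖x - y‖ ^ 2 ≤ ⟪g' x - g' y, x - y⟫ := by
  have hxy := hsconv x y
  have hyx := hsconv y x
  rw [norm_sub_rev] at hyx
  have : ⟪g' x - g' y, x - y⟫ = -⟪g' x, y - x⟫ - ⟪g' y, x - y⟫ := by
    rw [inner_sub_left, ← inner_neg_right, neg_sub]
  linarith

theorem norm_sub_smul_le_of_inner_bounds {d Δ : H} {μ η : ℝ} (hη : 0 ≤ η)
    (hmono : μ * ‖d‖ ^ 2 ≤ ⟪Δ, d⟫) (hcoco : η * ‖Δ‖ ^ 2 ≤ ⟪Δ, d⟫) :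
    ‖d - η • Δ‖ ≤ (1 - η * μ / 2) * ‖d‖ := by
  have hsq : ‖d - η • Δ‖ ^ 2 ≤ (1 - η * μ) * ‖d‖ ^ 2 := by
    rw [norm_sub_sq_real, inner_smul_right, norm_smul, Real.norm_of_nonneg hη, real_inner_comm]
    nlinarith [mul_le_mul_of_nonneg_left hmono hη, mul_le_mul_of_nonneg_left hcoco hη]
  -- `hsq` forces `η * μ ≤ 1` unless `d = 0`, so the contraction factor is nonnegative
  have hfactor : 0 ≤ (1 - η * μ / 2) * ‖d‖ := by
    rcases (norm_nonneg d).eq_or_lt with hd | hd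
    · rw [← hd, mul_zero]
    · have : 0 ≤ 1 - η * μ := nonneg_of_mul_nonneg_left
        ((sq_nonneg _).trans hsq) (pow_pos hd 2)
      have : 0 ≤ 1 - η * μ / 2 := by linarith
      positivity
  refine le_of_sq_le_sq (hsq.trans ?_) hfactor
  nlinarith [sq_nonneg (η * μ * ‖d‖)]

end GradientInequalities

/-- For a `μ`-strongly convex and `β`-smooth differentiable function `g`
on a real inner product space, the gradient-descent update is a `(1 - ημ/2)`-contraction
whenever `0 ≤ η ≤ 1/β`. -/
theorem gradient_descent_contraction_strongly_convex
    {H : Type*} [NormedAddCommGroup H] [InnerProductSpace ℝ H]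
    (g : H → ℝ) (g' : H → H) (μ β : ℝ) (hμ : 0 < μ) (hβ : 0 < β)
    (hdiff : ∀ x : H, HasFDerivAt g ((innerSL ℝ) (g' x)) x)
    (hsconv : ∀ x y : H, g y + ⟪g' y, x - y⟫ + μ / 2 * ‖x - y‖ ^ 2 ≤ g x)
    (hsmooth : ∀ x y : H, ‖g' x - g' y‖ ≤ β * ‖x - y‖)
    (η : ℝ) (hη0 : 0 ≤ η) (hη1 : η ≤ 1 / β) (w w' : H) :
    ‖(w - η • g' w) - (w' - η • g' w')‖ ≤ (1 - η * μ / 2) * ‖w - w'‖ := by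
  have hconv (x y : H) : g y + ⟪g' y, x - y⟫ ≤ g x := by
    linarith [hsconv x y, mul_nonneg hμ.le (sq_nonneg ‖x - y‖)]
  have hcoco : η * ‖g' w - g' w'‖ ^ 2 ≤ ⟪g' w - g' w', w - w'⟫ :=
    (mul_le_mul_of_nonneg_right hη1 (sq_nonneg _)).trans
      (inv_mul_sq_norm_grad_sub_le_inner hβ hdiff hconv hsmooth w w')
  have hstep : (w - η • g' w) - (w' - η • g' w') = (w - w') - η • (g' w - g' w') := by
    rw [smul_sub]; abel
  rw [hstep]
  exact norm_sub_smul_le_of_inner_bounds hη0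
    (mul_sq_norm_sub_le_inner_grad_sub hsconv w w') hcoco
end

section
/- For every real λ with 0 < λ < 1 and every positive integer t, ∑_{q=1}^{t−1} λ^{t−1−q}/(q+1) ≤ C_λ/t, where C_λ = (1/(λ log(1/λ))) · (8/(e² log(1/λ)) + 2). (For t = 1 the left-hand side is the empty sum 0.) -/
/-!
Write `t = n + (q + 1)` with `n = t - 1 - q`. Since `q + 1 ≥ 2`, each term of `t · ∑` is at
most `(n / 2 + 1) λⁿ`, so `t · ∑` is bounded by the full series
`∑ (n / 2 + 1) λⁿ = λ / (2 (1 - λ)²) + 1 / (1 - λ)`. Finally `λ log (1 / λ) ≤ 1 - λ`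
(from `log y ≤ y - 1`) and `e² ≤ 16` compare this with `C_λ`.
-/

/-- The constant `C_λ = (1/(λ log(1/λ))) · (8/(e² log(1/λ)) + 2)` for `0 < λ < 1`. -/
noncomputable def Clam (lam : ℝ) : ℝ :=
  (1 / (lam * Real.log (1 / lam))) * (8 / (Real.exp 1 ^ 2 * Real.log (1 / lam)) + 2)

open Finset Real

theorem mul_log_one_div_le_one_sub {x : ℝ} (hx : 0 < x) : x * log (1 / x) ≤ 1 - x := by
  calc x * log (1 / x) ≤ x * (1 / x - 1) :=
        mul_le_mul_of_nonneg_left (log_le_sub_one_of_pos (by positivity)) hx.le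
    _ = 1 - x := by field_simp

theorem sum_Icc_one_tsub_eq_sum_range {M : Type*} [AddCommMonoid M] (g : ℕ → M) (m : ℕ) :
    ∑ q ∈ Icc 1 m, g (m - q) = ∑ n ∈ range m, g n :=
  sum_nbij' (m - ·) (m - ·)
    (by intro q hq; simp only [mem_Icc, mem_range] at *; omega)
    (by intro n hn; simp only [mem_Icc, mem_range] at *; omega)
    (by intro q hq; simp only [mem_Icc] at hq; omega)
    (by intro n hn; simp only [mem_range] at hn; omega) (fun _ _ => rfl)

theorem hasSum_half_coe_add_one_mul_geometric {x : ℝ} (hx0 : 0 ≤ x) (hx1 : x < 1) :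
    HasSum (fun n : ℕ => ((n : ℝ) / 2 + 1) * x ^ n) (x / (1 - x) ^ 2 / 2 + (1 - x)⁻¹) := by
  have hnorm : ‖x‖ < 1 := by rwa [norm_of_nonneg hx0]
  exact (((hasSum_coe_mul_geometric_of_norm_lt_one hnorm).div_const 2).add
    (hasSum_geometric_of_lt_one hx0 hx1)).congr_fun fun n => by ring

theorem add_mul_div_le_half_add_one_mul {n q x : ℝ} (hn : 0 ≤ n) (hq : 1 ≤ q) (hx : 0 ≤ x) :
    (n + (q + 1)) * (x / (q + 1)) ≤ (n / 2 + 1) * x := by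
  have hq2 : x / (q + 1) ≤ x / 2 := by gcongr; linarith
  calc (n + (q + 1)) * (x / (q + 1)) = n * (x / (q + 1)) + x := by field_simp
    _ ≤ n * (x / 2) + x := by gcongr
    _ = (n / 2 + 1) * x := by ring

theorem div_one_sub_sq_div_two_add_inv_le_Clam {x : ℝ} (hx0 : 0 < x) (hx1 : x < 1) :
    x / (1 - x) ^ 2 / 2 + (1 - x)⁻¹ ≤ Clam x := by
  have hL : 0 < log (1 / x) := log_pos (by rw [lt_div_iff₀ hx0]; simpa using hx1)
  have hxL : 0 < x * log (1 / x) := mul_pos hx0 hL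
  have hxL_le := mul_log_one_div_le_one_sub hx0
  have he : exp 1 ^ 2 ≤ 16 := by nlinarith [exp_one_lt_three, exp_pos 1]
  have hC : Clam x = 8 / exp 1 ^ 2 * (x / (x * log (1 / x)) ^ 2) + 2 / (x * log (1 / x)) := by
    unfold Clam; field_simp
  rw [hC]
  gcongr ?_ + ?_
  · calc x / (1 - x) ^ 2 / 2 = 1 / 2 * (x / (1 - x) ^ 2) := by ring
      _ ≤ 8 / exp 1 ^ 2 * (x / (x * log (1 / x)) ^ 2) := by
        gcongr ?_ * ?_
        · rw [le_div_iff₀ (by positivity)]; linarith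
        · gcongr
  · calc (1 - x)⁻¹ ≤ (x * log (1 / x))⁻¹ := by gcongr
      _ = 1 / (x * log (1 / x)) := one_div _ |>.symm
      _ ≤ 2 / (x * log (1 / x)) := by gcongr; norm_num

theorem sum_pow_div_le_Clam_div_general (lam : ℝ) (hlam0 : 0 < lam) (hlam1 : lam < 1) (t : ℕ) :
    ∑ q ∈ Finset.Icc 1 (t - 1), lam ^ (t - 1 - q) / ((q : ℝ) + 1) ≤ Clam lam / (t : ℝ) := by
  rcases Nat.eq_zero_or_pos t with rfl | ht
  · simp
  rw [le_div_iff₀ (by exact_mod_cast ht)]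
  calc (∑ q ∈ Icc 1 (t - 1), lam ^ (t - 1 - q) / ((q : ℝ) + 1)) * t
      = ∑ q ∈ Icc 1 (t - 1), (((t - 1 - q : ℕ) : ℝ) + (q + 1)) * (lam ^ (t - 1 - q) / (q + 1)) := by
        rw [sum_mul]
        refine sum_congr rfl fun q hq => ?_
        have hqt := (mem_Icc.1 hq).2
        have ht_split : ((t - 1 - q : ℕ) : ℝ) + (q + 1) = t := by
          exact_mod_cast (by omega : t - 1 - q + (q + 1) = t)
        rw [ht_split, mul_comm]
    _ ≤ ∑ q ∈ Icc 1 (t - 1), (((t - 1 - q : ℕ) : ℝ) / 2 + 1) * lam ^ (t - 1 - q) :=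
        sum_le_sum fun q hq => add_mul_div_le_half_add_one_mul (Nat.cast_nonneg _)
          (by exact_mod_cast (mem_Icc.1 hq).1) (by positivity)
    _ = ∑ n ∈ range (t - 1), ((n : ℝ) / 2 + 1) * lam ^ n :=
        sum_Icc_one_tsub_eq_sum_range (fun n => ((n : ℝ) / 2 + 1) * lam ^ n) (t - 1)
    _ ≤ lam / (1 - lam) ^ 2 / 2 + (1 - lam)⁻¹ :=
        sum_le_hasSum _ (fun n _ => by positivity)
          (hasSum_half_coe_add_one_mul_geometric hlam0.le hlam1)
    _ ≤ Clam lam := div_one_sub_sq_div_two_add_inv_le_Clam hlam0 hlam1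

/-- For `0 < λ < 1` and a positive integer `t`,
`∑_{q=1}^{t-1} λ^{t-1-q}/(q+1) ≤ C_λ / t`. -/
theorem sum_pow_div_le_Clam_div (lam : ℝ) (hlam0 : 0 < lam) (hlam1 : lam < 1)
    (t : ℕ) (ht : 1 ≤ t) :
    ∑ q ∈ Finset.Icc 1 (t - 1), lam ^ (t - 1 - q) / ((q : ℝ) + 1) ≤ Clam lam / (t : ℝ) :=
  sum_pow_div_le_Clam_div_general lam hlam0 hlam1 t
end

section
/- Assume f is L-Lipschitz, P is a gossip matrix with spectral bound λ ∈ [0, 1), and (w^t(i)) are D-SGD iterates on a dataset S ∈ 𝒵^{m×n} with common initialization w^1(i) = w^1 for all i, i.e. w^{t+1}(i) = ∑_{l=1}^m P_{il} w^t(l) − η_t ∇f(w^t(i); Z_{j_t(i)(i)}). Then for every t ∈ {1,…,T}, letting w̄^{t+1} = (1/m)∑_{i=1}^m w^{t+1}(i), one has (∑_{i=1}^m ‖w̄^{t+1} − w^{t+1}(i)‖²)^{1/2} ≤ 2√m · L · ∑_{q=1}^{t} η_q λ^{t−q}. -/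
/-!
The deviations `w̄ - w(i)` of the iterates from their average evolve by
`δ^{t+1}(i) = ∑_l P_il δ^t(l) - η_t (ḡ^t - g^t(i))`, because a doubly stochastic `P` preserves the
average. The deviations sum to zero, so the spectral bound contracts the first term by `λ`, while
the second has norm at most `2Lη_t` at each node, hence at most `2√m L η_t` in `ℓ²`. Unrolling
this recursion from the consensual start `δ^1 = 0` gives the geometric sum.
-/

open Finset

section Deviation

variable {ι H : Type*} [Fintype ι] [NormedAddCommGroup H]

theorem sqrt_sum_norm_sq_sub_le (u v : ι → H) :
    √(∑ i, ‖u i - v i‖ ^ 2) ≤ √(∑ i, ‖u i‖ ^ 2) + √(∑ i, ‖v i‖ ^ 2) := by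
  simpa only [PiLp.norm_eq_of_L2, WithLp.ofLp_sub, Pi.sub_apply] using
    norm_sub_le (WithLp.toLp 2 u) (WithLp.toLp 2 v)

theorem sqrt_sum_norm_sq_le {u : ι → H} {C : ℝ} (hu : ∀ i, ‖u i‖ ≤ C) :
    √(∑ i, ‖u i‖ ^ 2) ≤ √(Fintype.card ι) * C := by
  rcases isEmpty_or_nonempty ι with hι | ⟨⟨i₀⟩⟩
  · simp
  have hC : 0 ≤ C := (norm_nonneg _).trans (hu i₀)
  calc √(∑ i, ‖u i‖ ^ 2) ≤ √(∑ _i : ι, C ^ 2) :=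
        Real.sqrt_le_sqrt (sum_le_sum fun i _ => pow_le_pow_left₀ (norm_nonneg _) (hu i) 2)
    _ = √(Fintype.card ι) * C := by
        rw [sum_const, card_univ, nsmul_eq_mul, Real.sqrt_mul (Nat.cast_nonneg _),
          Real.sqrt_sq hC]

variable [NormedSpace ℝ H]

noncomputable def average (v : ι → H) : H := (Fintype.card ι : ℝ)⁻¹ • ∑ i, v i

noncomputable def deviation (v : ι → H) (i : ι) : H := average v - v i

noncomputable def consensusError (v : ι → H) : ℝ := √(∑ i, ‖deviation v i‖ ^ 2)

theorem card_smul_average (v : ι → H) : (Fintype.card ι : ℝ) • average v = ∑ i, v i := by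
  rcases isEmpty_or_nonempty ι with hι | hι
  · simp
  · rw [average, smul_smul, mul_inv_cancel₀ (by positivity), one_smul]

theorem sum_deviation (v : ι → H) : ∑ i, deviation v i = 0 := by
  simp only [deviation, sum_sub_distrib, sum_const, card_univ, ← Nat.cast_smul_eq_nsmul ℝ,
    card_smul_average, sub_self]

theorem average_const [Nonempty ι] (c : H) : average (fun _ : ι => c) = c := by
  rw [average, sum_const, card_univ, ← Nat.cast_smul_eq_nsmul ℝ, smul_smul,
    inv_mul_cancel₀ (by positivity), one_smul]

theorem consensusError_const (c : H) : consensusError (fun _ : ι => c) = 0 := by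
  have hdev (i : ι) : deviation (fun _ : ι => c) i = 0 := by
    have : Nonempty ι := ⟨i⟩
    rw [deviation, average_const, sub_self]
  simp [consensusError, hdev]

theorem norm_average_le [Nonempty ι] {v : ι → H} {C : ℝ} (hv : ∀ i, ‖v i‖ ≤ C) :
    ‖average v‖ ≤ C := by
  have hsum : ‖∑ i, v i‖ ≤ Fintype.card ι * C := by
    simpa using norm_sum_le_of_le univ fun i _ => hv i
  rw [average, norm_smul, norm_inv, Real.norm_natCast, inv_mul_le_iff₀ (by positivity)]
  exact hsum

theorem norm_deviation_le {v : ι → H} {C : ℝ} (hv : ∀ i, ‖v i‖ ≤ C) (i : ι) :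
    ‖deviation v i‖ ≤ 2 * C := by
  have : Nonempty ι := ⟨i⟩
  calc ‖deviation v i‖ ≤ ‖average v‖ + ‖v i‖ := norm_sub_le _ _
    _ ≤ 2 * C := by linarith [norm_average_le hv, hv i]

theorem deviation_gossip_step {P : ι → ι → ℝ} (hProw : ∀ i, ∑ l, P i l = 1)
    (hPcol : ∀ l, ∑ i, P i l = 1) (η : ℝ) (w g : ι → H) (i : ι) :
    deviation (fun i => ∑ l, P i l • w l - η • g i) i
      = ∑ l, P i l • deviation w l - η • deviation g i := by
  have hmix : ∑ r, ∑ l, P r l • w l = ∑ l, w l := by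
    rw [sum_comm]
    simp only [← sum_smul, hPcol, one_smul]
  have hrow : ∑ l, P i l • average w = average w := by rw [← sum_smul, hProw, one_smul]
  have havg : average (fun i => ∑ l, P i l • w l - η • g i) = average w - η • average g := by
    simp only [average, sum_sub_distrib, hmix, ← smul_sum, smul_sub, smul_comm η]
  simp only [deviation, havg, smul_sub, sum_sub_distrib, hrow]
  abel

theorem consensusError_gossip_step_le {P : ι → ι → ℝ} (hProw : ∀ i, ∑ l, P i l = 1)
    (hPcol : ∀ l, ∑ i, P i l = 1) {lam : ℝ}
    (hspec : ∀ v : ι → H, ∑ i, v i = 0 →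
      √(∑ i, ‖∑ l, P i l • v l‖ ^ 2) ≤ lam * √(∑ i, ‖v i‖ ^ 2))
    {η L : ℝ} (hη : 0 ≤ η) (w g : ι → H) (hg : ∀ i, ‖g i‖ ≤ L) :
    consensusError (fun i => ∑ l, P i l • w l - η • g i)
      ≤ lam * consensusError w + 2 * √(Fintype.card ι) * L * η := by
  have hnoise (i : ι) : ‖η • deviation g i‖ ≤ 2 * L * η := by
    rw [norm_smul, Real.norm_of_nonneg hη, mul_comm]
    exact mul_le_mul_of_nonneg_right (norm_deviation_le hg i) hη
  calc consensusError (fun i => ∑ l, P i l • w l - η • g i)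
      ≤ √(∑ i, ‖∑ l, P i l • deviation w l‖ ^ 2) + √(∑ i, ‖η • deviation g i‖ ^ 2) := by
        simpa only [consensusError, deviation_gossip_step hProw hPcol]
          using sqrt_sum_norm_sq_sub_le _ _
    _ ≤ lam * consensusError w + √(Fintype.card ι) * (2 * L * η) :=
        add_le_add (hspec _ (sum_deviation w)) (sqrt_sum_norm_sq_le hnoise)
    _ = lam * consensusError w + 2 * √(Fintype.card ι) * L * η := by ring

end Deviation

theorem sum_Icc_mul_pow_succ (η : ℕ → ℝ) (lam : ℝ) (t : ℕ) :
    ∑ q ∈ Icc 1 (t + 1), η q * lam ^ (t + 1 - q)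
      = lam * ∑ q ∈ Icc 1 t, η q * lam ^ (t - q) + η (t + 1) := by
  rw [sum_Icc_succ_top (by omega), Nat.sub_self, pow_zero, mul_one, mul_sum]
  congr 1
  refine sum_congr rfl fun q hq => ?_
  rw [show t + 1 - q = t - q + 1 by grind, pow_succ]
  ring

theorem le_mul_sum_mul_pow_of_le_mul_add {a η : ℕ → ℝ} {lam C : ℝ} {T : ℕ} (hlam : 0 ≤ lam)
    (ha : a 1 ≤ 0) (hstep : ∀ t, 1 ≤ t → t ≤ T → a (t + 1) ≤ lam * a t + C * η t) :
    ∀ t ≤ T, a (t + 1) ≤ C * ∑ q ∈ Icc 1 t, η q * lam ^ (t - q) := by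
  intro t
  induction t with
  | zero => simpa using ha
  | succ t ih =>
    intro ht
    calc a (t + 1 + 1) ≤ lam * a (t + 1) + C * η (t + 1) := hstep (t + 1) (by omega) ht
      _ ≤ lam * (C * ∑ q ∈ Icc 1 t, η q * lam ^ (t - q)) + C * η (t + 1) := by
          gcongr
          exact ih (by omega)
      _ = C * ∑ q ∈ Icc 1 (t + 1), η q * lam ^ (t + 1 - q) := by
          rw [sum_Icc_mul_pow_succ]
          ring

theorem dsgd_consensus_bound_general
    {H : Type*} [NormedAddCommGroup H] [InnerProductSpace ℝ H]
    {Z : Type*} (f' : Z → H → H)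
    (L : ℝ)
    (hgradbd : ∀ (z : Z) (x : H), ‖f' z x‖ ≤ L)
    (m n T : ℕ)
    (P : Fin m → Fin m → ℝ)
    (hPsym : ∀ i l, P i l = P l i)
    (hProw : ∀ i, ∑ l, P i l = 1)
    (lam : ℝ) (hlam0 : 0 ≤ lam)
    (hspec : ∀ vv : Fin m → H, ∑ i, vv i = 0 →
      Real.sqrt (∑ i, ‖∑ l, P i l • vv l‖ ^ 2) ≤ lam * Real.sqrt (∑ i, ‖vv i‖ ^ 2))
    (S : Fin m → Fin n → Z)
    (η : ℕ → ℝ) (hηpos : ∀ t, 1 ≤ t → t ≤ T → 0 < η t)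
    (j : ℕ → Fin m → Fin n)
    (w₀ : H) (w : ℕ → Fin m → H)
    (hw1 : ∀ i, w 1 i = w₀)
    (hwrec : ∀ t, 1 ≤ t → t ≤ T → ∀ i,
      w (t + 1) i = ∑ l, P i l • w t l - η t • f' (S i (j t i)) (w t i)) :
    ∀ t, 1 ≤ t → t ≤ T →
      Real.sqrt (∑ i, ‖(m : ℝ)⁻¹ • (∑ i', w (t + 1) i') - w (t + 1) i‖ ^ 2)
        ≤ 2 * Real.sqrt m * L * ∑ q ∈ Finset.Icc 1 t, η q * lam ^ (t - q) := by
  have hPcol (l : Fin m) : ∑ i, P i l = 1 := by simpa only [hPsym] using hProw l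
  have hstep (t : ℕ) (ht1 : 1 ≤ t) (htT : t ≤ T) :
      consensusError (w (t + 1)) ≤ lam * consensusError (w t) + 2 * √m * L * η t := by
    rw [funext (hwrec t ht1 htT)]
    simpa using consensusError_gossip_step_le hProw hPcol hspec (hηpos t ht1 htT).le (w t) _
      fun i => hgradbd _ _
  have hstart : consensusError (w 1) ≤ 0 := by rw [funext hw1, consensusError_const]
  intro t _ htT
  simpa [consensusError, deviation, average] using
    le_mul_sum_mul_pow_of_le_mul_add (a := fun t => consensusError (w t)) hlam0 hstart hstep
      t htT

/-- Consensus bound for D-SGD: if `f` is `L`-Lipschitz and `P` is a gossip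
matrix with spectral bound `λ ∈ [0,1)`, then for all `t ∈ {1,…,T}`,
`(∑_i ‖w̄^{t+1} - w^{t+1}(i)‖²)^{1/2} ≤ 2√m L ∑_{q=1}^t η_q λ^{t-q}`. -/
theorem dsgd_consensus_bound
    {H : Type*} [NormedAddCommGroup H] [InnerProductSpace ℝ H]
    {Z : Type*} (f : Z → H → ℝ) (f' : Z → H → H)
    (L : ℝ) (hL : 0 < L)
    (hdiff : ∀ (z : Z) (x : H), HasFDerivAt (f z) ((innerSL ℝ) (f' z x)) x)
    (hlip : ∀ (z : Z) (x y : H), |f z x - f z y| ≤ L * ‖x - y‖)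
    (hgradbd : ∀ (z : Z) (x : H), ‖f' z x‖ ≤ L)
    (m n T : ℕ) (hm : 1 ≤ m) (hn : 1 ≤ n) (hT : 1 ≤ T)
    (P : Fin m → Fin m → ℝ)
    (hPsym : ∀ i l, P i l = P l i)
    (hPpos : ∀ i l, 0 ≤ P i l)
    (hProw : ∀ i, ∑ l, P i l = 1)
    (lam : ℝ) (hlam0 : 0 ≤ lam) (hlam1 : lam < 1)
    (hspec : ∀ vv : Fin m → H, ∑ i, vv i = 0 →
      Real.sqrt (∑ i, ‖∑ l, P i l • vv l‖ ^ 2) ≤ lam * Real.sqrt (∑ i, ‖vv i‖ ^ 2))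
    (S : Fin m → Fin n → Z)
    (η : ℕ → ℝ) (hηpos : ∀ t, 1 ≤ t → t ≤ T → 0 < η t)
    (j : ℕ → Fin m → Fin n)
    (w₀ : H) (w : ℕ → Fin m → H)
    (hw1 : ∀ i, w 1 i = w₀)
    (hwrec : ∀ t, 1 ≤ t → t ≤ T → ∀ i,
      w (t + 1) i = ∑ l, P i l • w t l - η t • f' (S i (j t i)) (w t i)) :
    ∀ t, 1 ≤ t → t ≤ T →
      Real.sqrt (∑ i, ‖(m : ℝ)⁻¹ • (∑ i', w (t + 1) i') - w (t + 1) i‖ ^ 2)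
        ≤ 2 * Real.sqrt m * L * ∑ q ∈ Finset.Icc 1 t, η q * lam ^ (t - q) :=
  dsgd_consensus_bound_general f' L hgradbd m n T P hPsym hProw lam hlam0 hspec S η hηpos j w₀ w hw1
    hwrec
end

section
/- Assume f is convex, L-Lipschitz and β-smooth, P is a gossip matrix with spectral bound λ ∈ [0, 1), and the stepsize is constant, η_t = η for all t, with 0 < η ≤ 2/β. Then for every z ∈ 𝒵, |f(w̄^{T+1}; z) − f(v̄^{T+1}; z)| ≤ 4η²βL²T/(1−λ) + (2ηL²/m) ∑_{t=1}^T 𝟙[j_t(r)=k]. -/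
/-!
The averages `w̄ᵗ` and `v̄ᵗ` follow a perturbed gradient step on the average loss
`(1/m) ∑ᵢ f(·; Z_{jₜ(i)(i)})`. For a convex β-smooth loss the gradient is co-coercive,
`⟪∇f x - ∇f y, x - y⟫ ≥ β⁻¹ ‖∇f x - ∇f y‖²`, so the exact averaged step with `η ≤ 2/β` is
non-expansive. The perturbation has two sources: local iterates differ from their average, and
the gossip contraction `λ` keeps this consensus error below `2ηLm/(1-λ)` in total; and at steps
where machine `r` draws the replaced sample `k` the two runs see different gradients, which
costs at most `2L`. Summing the per-step errors and using that `f` is `L`-Lipschitz gives the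
bound.
-/

open scoped RealInnerProductSpace
open Finset AffineMap

section SmoothConvex

variable {H : Type*} [NormedAddCommGroup H] [InnerProductSpace ℝ H] {f : H → ℝ} {g : H → H}
  {β : ℝ}

theorem hasDerivAt_comp_lineMap_of_grad (hf : ∀ x, HasFDerivAt f (innerSL ℝ (g x)) x)
    (x y : H) (t : ℝ) :
    HasDerivAt (fun s => f (lineMap x y s)) ⟪g (lineMap x y t), y - x⟫ t :=
  (hf _).comp_hasDerivAt t hasDerivAt_lineMap

theorem ConvexOn.add_inner_sub_le_of_grad (hconv : ConvexOn ℝ Set.univ f)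
    (hf : ∀ x, HasFDerivAt f (innerSL ℝ (g x)) x) (x y : H) :
    f x + ⟪g x, y - x⟫ ≤ f y := by
  have := (hconv.comp_affineMap (lineMap x y)).le_slope_of_hasDerivAt (Set.mem_univ 0)
    (Set.mem_univ 1) zero_lt_one (hasDerivAt_comp_lineMap_of_grad hf x y 0)
  simp [slope_def_field] at this
  linarith

theorem le_add_inner_sub_add_sq_of_lipschitz_grad (hf : ∀ x, HasFDerivAt f (innerSL ℝ (g x)) x)
    (hg : ∀ x y, ‖g x - g y‖ ≤ β * ‖x - y‖) (x y : H) :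
    f y ≤ f x + ⟪g x, y - x⟫ + β / 2 * ‖y - x‖ ^ 2 := by
  set d := y - x
  have hψ (t : ℝ) : HasDerivAt (fun s => f (lineMap x y s) - s * ⟪g x, d⟫)
      (⟪g (lineMap x y t), d⟫ - ⟪g x, d⟫) t :=
    (hasDerivAt_comp_lineMap_of_grad hf x y t).sub (hasDerivAt_mul_const ⟪g x, d⟫)
  have hB (t : ℝ) :
      HasDerivAt (fun s => f x + β / 2 * s ^ 2 * ‖d‖ ^ 2) (β * t * ‖d‖ ^ 2) t :=
    ((((hasDerivAt_pow 2 t).const_mul (β / 2)).mul_const (‖d‖ ^ 2)).const_add (f x)).congr_deriv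
      (by ring)
  have hbound (t : ℝ) (ht : 0 ≤ t) : ⟪g (lineMap x y t), d⟫ - ⟪g x, d⟫ ≤ β * t * ‖d‖ ^ 2 :=
    calc ⟪g (lineMap x y t), d⟫ - ⟪g x, d⟫ = ⟪g (lineMap x y t) - g x, d⟫ :=
          (inner_sub_left ..).symm
      _ ≤ ‖g (lineMap x y t) - g x‖ * ‖d‖ := real_inner_le_norm _ _
      _ ≤ β * ‖lineMap x y t - x‖ * ‖d‖ := by gcongr; exact hg _ _
      _ = β * t * ‖d‖ ^ 2 := by
        rw [← vsub_eq_sub, lineMap_vsub_left, vsub_eq_sub, norm_smul, Real.norm_of_nonneg ht]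
        ring
  have := image_le_of_deriv_right_le_deriv_boundary (a := 0) (b := 1)
    (fun t _ => (hψ t).continuousAt.continuousWithinAt) (fun t _ => (hψ t).hasDerivWithinAt)
    (by simp) (fun t _ => (hB t).continuousAt.continuousWithinAt)
    (fun t _ => (hB t).hasDerivWithinAt) (fun t ht => hbound t ht.1)
    (Set.right_mem_Icc.2 zero_le_one)
  simp at this
  linarith

/-- Obtained by comparing `f x` and `f y` through the point `y - β⁻¹ • (g y - g x)`. -/
theorem ConvexOn.add_inner_sub_add_sq_le_of_lipschitz_grad (hconv : ConvexOn ℝ Set.univ f)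
    (hf : ∀ x, HasFDerivAt f (innerSL ℝ (g x)) x) (hg : ∀ x y, ‖g x - g y‖ ≤ β * ‖x - y‖)
    (hβ : 0 < β) (x y : H) :
    f x + ⟪g x, y - x⟫ + (2 * β)⁻¹ * ‖g y - g x‖ ^ 2 ≤ f y := by
  set e := g y - g x
  set z := y - β⁻¹ • e
  have hx := hconv.add_inner_sub_le_of_grad hf x z
  have hy := le_add_inner_sub_add_sq_of_lipschitz_grad hf hg y z
  have hzx : z - x = (y - x) - β⁻¹ • e := sub_right_comm ..
  have hzy : z - y = -(β⁻¹ • e) := sub_sub_cancel_left ..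
  rw [hzx, inner_sub_right, real_inner_smul_right] at hx
  rw [hzy, inner_neg_right, real_inner_smul_right, norm_neg, norm_smul,
    Real.norm_of_nonneg (inv_nonneg.2 hβ.le)] at hy
  have h₁ : β / 2 * (β⁻¹ * ‖e‖) ^ 2 = (2 * β)⁻¹ * ‖e‖ ^ 2 := by field_simp
  have he : ⟪g y, e⟫ - ⟪g x, e⟫ = ‖e‖ ^ 2 := by
    rw [← inner_sub_left, real_inner_self_eq_norm_sq]
  have h₂ : β⁻¹ * ⟪g y, e⟫ - β⁻¹ * ⟪g x, e⟫ = 2 * ((2 * β)⁻¹ * ‖e‖ ^ 2) := by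
    rw [← mul_sub, he]
    field_simp
  linarith

theorem ConvexOn.cocoercive_of_lipschitz_grad (hconv : ConvexOn ℝ Set.univ f)
    (hf : ∀ x, HasFDerivAt f (innerSL ℝ (g x)) x) (hg : ∀ x y, ‖g x - g y‖ ≤ β * ‖x - y‖)
    (hβ : 0 < β) (x y : H) :
    β⁻¹ * ‖g x - g y‖ ^ 2 ≤ ⟪g x - g y, x - y⟫ := by
  have hxy := hconv.add_inner_sub_add_sq_le_of_lipschitz_grad hf hg hβ x y
  have hyx := hconv.add_inner_sub_add_sq_le_of_lipschitz_grad hf hg hβ y x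
  rw [norm_sub_rev, ← neg_sub x y, inner_neg_right] at hxy
  have : β⁻¹ = (2 * β)⁻¹ + (2 * β)⁻¹ := by field_simp; norm_num
  rw [inner_sub_left, this]
  linarith

end SmoothConvex

section Average

variable {ι E : Type*} [Fintype ι] [SeminormedAddCommGroup E] [NormedSpace ℝ E]

noncomputable def avg (x : ι → E) : E := (Fintype.card ι : ℝ)⁻¹ • ∑ i, x i

theorem avg_fin {m : ℕ} (x : Fin m → E) : avg x = (m : ℝ)⁻¹ • ∑ i, x i := by
  rw [avg, Fintype.card_fin]

theorem card_smul_avg [Nonempty ι] (x : ι → E) : (Fintype.card ι : ℝ) • avg x = ∑ i, x i := by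
  rw [avg, smul_smul, mul_inv_cancel₀ (Nat.cast_ne_zero.2 Fintype.card_ne_zero), one_smul]

theorem avg_const [Nonempty ι] (a : E) : avg (fun _ : ι => a) = a := by
  rw [avg, sum_const, card_univ, ← Nat.cast_smul_eq_nsmul ℝ, smul_smul,
    inv_mul_cancel₀ (Nat.cast_ne_zero.2 Fintype.card_ne_zero), one_smul]

theorem sum_sub_avg_eq_zero [Nonempty ι] (x : ι → E) : ∑ i, (x i - avg x) = 0 := by
  rw [sum_sub_distrib, sum_const, card_univ, ← Nat.cast_smul_eq_nsmul ℝ, card_smul_avg,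
    sub_self]

theorem norm_avg_le [Nonempty ι] {x : ι → E} {C : ℝ} (hx : ∀ i, ‖x i‖ ≤ C) : ‖avg x‖ ≤ C := by
  have hcard : (0 : ℝ) < Fintype.card ι := Nat.cast_pos.2 Fintype.card_pos
  rw [avg, norm_smul, Real.norm_of_nonneg (by positivity), inv_mul_le_iff₀ hcard]
  calc ‖∑ i, x i‖ ≤ ∑ _i : ι, C := (norm_sum_le _ _).trans (sum_le_sum fun i _ => hx i)
    _ = Fintype.card ι * C := by simp

end Average

section L2

variable {ι E : Type*} [Fintype ι] [SeminormedAddCommGroup E]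

theorem norm_toLp_le_sqrt_card_mul {u : ι → E} {C : ℝ} (hC : 0 ≤ C) (hu : ∀ i, ‖u i‖ ≤ C) :
    ‖WithLp.toLp 2 u‖ ≤ √(Fintype.card ι) * C := by
  rw [PiLp.norm_eq_of_L2, ← Real.sqrt_sq hC, ← Real.sqrt_mul (Nat.cast_nonneg _)]
  gcongr
  calc ∑ i, ‖u i‖ ^ 2 ≤ ∑ _i : ι, C ^ 2 :=
        sum_le_sum fun i _ => pow_le_pow_left₀ (norm_nonneg _) (hu i) 2
    _ = Fintype.card ι * C ^ 2 := by simp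

theorem sum_norm_le_sqrt_card_mul_norm_toLp (u : ι → E) :
    ∑ i, ‖u i‖ ≤ √(Fintype.card ι) * ‖WithLp.toLp 2 u‖ := by
  rw [PiLp.norm_eq_of_L2, ← Real.sqrt_mul (Nat.cast_nonneg _),
    ← Real.sqrt_sq (sum_nonneg fun i _ => norm_nonneg (u i))]
  gcongr
  simpa using sq_sum_le_card_mul_sum_sq (s := univ) (f := fun i => ‖u i‖)

end L2

section AveragedGradientStep

variable {H : Type*} [NormedAddCommGroup H] [InnerProductSpace ℝ H] {β η : ℝ}

theorem norm_sub_le_norm_of_sq_le_two_inner {a d : H} (h : ‖a‖ ^ 2 ≤ 2 * ⟪a, d⟫) :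
    ‖d - a‖ ≤ ‖d‖ := by
  rw [← sq_le_sq₀ (norm_nonneg _) (norm_nonneg _), norm_sub_sq_real, real_inner_comm]
  linarith

theorem norm_sub_smul_avg_le_of_cocoercive {ι : Type*} [Fintype ι] (A : ι → H) (d : H)
    (hA : ∀ i, β⁻¹ * ‖A i‖ ^ 2 ≤ ⟪A i, d⟫) (hβ : 0 < β) (hη : 0 ≤ η) (hηβ : η ≤ 2 / β) :
    ‖d - η • avg A‖ ≤ ‖d‖ := by
  set c : ℝ := (Fintype.card ι : ℝ)⁻¹
  have hcard : c ^ 2 * Fintype.card ι = c := by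
    rcases eq_or_ne (Fintype.card ι : ℝ) 0 with h | h
    · simp [c, h]
    · simp only [c, sq, mul_assoc, inv_mul_cancel₀ h, mul_one]
  have hsum : β⁻¹ * ∑ i, ‖A i‖ ^ 2 ≤ ⟪∑ i, A i, d⟫ := by
    rw [sum_inner, mul_sum]
    exact sum_le_sum fun i _ => hA i
  have hηβ' : η * β ≤ 2 := by rwa [le_div_iff₀ hβ] at hηβ
  refine norm_sub_le_norm_of_sq_le_two_inner ?_
  calc ‖η • c • ∑ i, A i‖ ^ 2 = η ^ 2 * c ^ 2 * ‖∑ i, A i‖ ^ 2 := by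
        rw [norm_smul, norm_smul, Real.norm_of_nonneg hη, Real.norm_of_nonneg (by positivity)]
        ring
    _ ≤ η ^ 2 * c ^ 2 * (Fintype.card ι * ∑ i, ‖A i‖ ^ 2) := by
        gcongr
        calc ‖∑ i, A i‖ ^ 2 ≤ (∑ i, ‖A i‖) ^ 2 := by gcongr; exact norm_sum_le _ _
          _ ≤ _ := by simpa using sq_sum_le_card_mul_sum_sq (s := univ) (f := fun i => ‖A i‖)
    _ = η ^ 2 * (c ^ 2 * Fintype.card ι) * ∑ i, ‖A i‖ ^ 2 := by ring
    _ = 2 * (η * c) * ((η * β) / 2 * (β⁻¹ * ∑ i, ‖A i‖ ^ 2)) := by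
        rw [hcard]; field_simp
    _ ≤ 2 * (η * c) * (1 * ⟪∑ i, A i, d⟫) := by
        have : 0 ≤ β⁻¹ * ∑ i, ‖A i‖ ^ 2 := by positivity
        gcongr
        linarith
    _ = 2 * ⟪η • c • ∑ i, A i, d⟫ := by
        rw [real_inner_smul_left, real_inner_smul_left]; ring

theorem norm_sub_sub_le_of_lipschitz {E : Type*} [SeminormedAddCommGroup E] (g g' : E → E)
    (hg : ∀ x y, ‖g x - g y‖ ≤ β * ‖x - y‖) (a b x y : E) :
    ‖(g x - g' y) - (g a - g b)‖ ≤ β * ‖x - a‖ + β * ‖y - b‖ + ‖g y - g' y‖ := by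
  calc ‖(g x - g' y) - (g a - g b)‖ = ‖(g x - g a) - (g y - g b) + (g y - g' y)‖ := by
        congr 1; abel
    _ ≤ ‖g x - g a‖ + ‖g y - g b‖ + ‖g y - g' y‖ :=
        (norm_add_le _ _).trans (by gcongr; exact norm_sub_le _ _)
    _ ≤ _ := by gcongr <;> exact hg _ _

/-- By co-coercivity the exact averaged step `a ↦ a - η • avg (fun i => g i a)` is
non-expansive. -/
theorem norm_sub_smul_avg_sub_sub_smul_avg_le {ι : Type*} [Fintype ι] (g g' : ι → H → H)
    (hcoco : ∀ i x y, β⁻¹ * ‖g i x - g i y‖ ^ 2 ≤ ⟪g i x - g i y, x - y⟫)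
    (hlip : ∀ i x y, ‖g i x - g i y‖ ≤ β * ‖x - y‖) (hβ : 0 < β) (hη : 0 ≤ η)
    (hηβ : η ≤ 2 / β) (a b : H) (x y : ι → H) :
    ‖(a - η • avg (fun i => g i (x i))) - (b - η • avg (fun i => g' i (y i)))‖
      ≤ ‖a - b‖ + η * (Fintype.card ι : ℝ)⁻¹ *
          (β * ∑ i, ‖x i - a‖ + β * ∑ i, ‖y i - b‖ + ∑ i, ‖g i (y i) - g' i (y i)‖) := by
  set A : ι → H := fun i => g i a - g i b
  set D : ι → H := fun i => (g i (x i) - g' i (y i)) - A i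
  have hsplit : (a - η • avg (fun i => g i (x i))) - (b - η • avg (fun i => g' i (y i)))
      = (a - b - η • avg A) - η • avg D := by
    simp only [avg, D, sum_sub_distrib, smul_sub]
    abel
  have hD : ∑ i, ‖D i‖
      ≤ β * ∑ i, ‖x i - a‖ + β * ∑ i, ‖y i - b‖ + ∑ i, ‖g i (y i) - g' i (y i)‖ := by
    simp only [mul_sum, ← sum_add_distrib]
    exact sum_le_sum fun i _ => norm_sub_sub_le_of_lipschitz _ _ (hlip i) _ _ _ _
  rw [hsplit]
  calc _ ≤ ‖a - b - η • avg A‖ + ‖η • avg D‖ := norm_sub_le _ _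
    _ ≤ ‖a - b‖ + η * (Fintype.card ι : ℝ)⁻¹ * ∑ i, ‖D i‖ := by
        gcongr
        · exact norm_sub_smul_avg_le_of_cocoercive A _ (fun i => hcoco i a b) hβ hη hηβ
        · rw [avg, norm_smul, norm_smul, Real.norm_of_nonneg hη,
            Real.norm_of_nonneg (by positivity), ← mul_assoc]
          gcongr
          exact norm_sum_le _ _
    _ ≤ _ := by gcongr

end AveragedGradientStep

section Gossip

variable {H : Type*} [NormedAddCommGroup H] [InnerProductSpace ℝ H]
  {ι : Type*} [Fintype ι] {P : ι → ι → ℝ}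

theorem sum_sum_gossip_smul (hPsym : ∀ i l, P i l = P l i) (hProw : ∀ i, ∑ l, P i l = 1)
    (x : ι → H) : ∑ i, ∑ l, P i l • x l = ∑ l, x l := by
  rw [sum_comm]
  refine sum_congr rfl fun l _ => ?_
  rw [← sum_smul, sum_congr rfl fun i _ => hPsym i l, hProw, one_smul]

theorem avg_gossip_step (hPsym : ∀ i l, P i l = P l i) (hProw : ∀ i, ∑ l, P i l = 1)
    {η : ℝ} {x x' G : ι → H} (hx' : ∀ i, x' i = ∑ l, P i l • x l - η • G i) :
    avg x' = avg x - η • avg G := by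
  simp only [avg, hx', sum_sub_distrib, sum_sum_gossip_smul hPsym hProw, ← smul_sum, smul_sub]
  rw [smul_comm]

theorem gossip_step_sub_avg (hPsym : ∀ i l, P i l = P l i) (hProw : ∀ i, ∑ l, P i l = 1)
    {η : ℝ} {x x' G : ι → H} (hx' : ∀ i, x' i = ∑ l, P i l • x l - η • G i) (i : ι) :
    x' i - avg x' = ∑ l, P i l • (x l - avg x) - η • (G i - avg G) := by
  rw [avg_gossip_step hPsym hProw hx', hx']
  simp only [smul_sub, sum_sub_distrib, ← sum_smul, hProw, one_smul]
  abel

theorem norm_toLp_gossip_step_sub_avg_le [Nonempty ι] (hPsym : ∀ i l, P i l = P l i)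
    (hProw : ∀ i, ∑ l, P i l = 1) {lam : ℝ}
    (hspec : ∀ u : ι → H, ∑ i, u i = 0 →
      √(∑ i, ‖∑ l, P i l • u l‖ ^ 2) ≤ lam * √(∑ i, ‖u i‖ ^ 2))
    {η L : ℝ} (hη : 0 ≤ η) {x x' G : ι → H} (hG : ∀ i, ‖G i‖ ≤ L)
    (hx' : ∀ i, x' i = ∑ l, P i l • x l - η • G i) :
    ‖WithLp.toLp 2 (fun i => x' i - avg x')‖
      ≤ lam * ‖WithLp.toLp 2 (fun i => x i - avg x)‖ + η * (√(Fintype.card ι) * (2 * L)) := by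
  have hL : 0 ≤ L := (norm_nonneg _).trans (hG (Classical.arbitrary ι))
  have hsplit : WithLp.toLp 2 (fun i => x' i - avg x')
      = WithLp.toLp 2 (fun i => ∑ l, P i l • (x l - avg x))
        - η • WithLp.toLp 2 (fun i => G i - avg G) := by
    ext i
    exact gossip_step_sub_avg hPsym hProw hx' i
  rw [hsplit]
  refine (norm_sub_le _ _).trans (add_le_add ?_ ?_)
  · simpa only [PiLp.norm_eq_of_L2] using hspec _ (sum_sub_avg_eq_zero x)
  · rw [norm_smul, Real.norm_of_nonneg hη]
    gcongr
    refine norm_toLp_le_sqrt_card_mul (by positivity) fun i => ?_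
    exact (norm_sub_le _ _).trans (by linarith [hG i, norm_avg_le hG])

theorem sum_norm_sub_avg_le_of_gossip [Nonempty ι] (hPsym : ∀ i l, P i l = P l i)
    (hProw : ∀ i, ∑ l, P i l = 1) {lam : ℝ} (hlam0 : 0 ≤ lam) (hlam1 : lam < 1)
    (hspec : ∀ u : ι → H, ∑ i, u i = 0 →
      √(∑ i, ‖∑ l, P i l • u l‖ ^ 2) ≤ lam * √(∑ i, ‖u i‖ ^ 2))
    {η L : ℝ} (hη : 0 ≤ η) {T : ℕ} {x G : ℕ → ι → H} (hG : ∀ t i, ‖G t i‖ ≤ L) {x₀ : H}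
    (hx₁ : ∀ i, x 1 i = x₀)
    (hx : ∀ t, 1 ≤ t → t ≤ T → ∀ i, x (t + 1) i = ∑ l, P i l • x t l - η • G t i) :
    ∀ t, 1 ≤ t → t ≤ T + 1 → ∑ i, ‖x t i - avg (x t)‖ ≤ 2 * η * L * Fintype.card ι / (1 - lam) := by
  have hL : 0 ≤ L := (norm_nonneg _).trans (hG 0 (Classical.arbitrary ι))
  have hlam : 0 < 1 - lam := by linarith
  set c := η * (√(Fintype.card ι) * (2 * L))
  have hdev : ∀ t, 1 ≤ t → t ≤ T + 1 →
      ‖WithLp.toLp 2 (fun i => x t i - avg (x t))‖ ≤ c / (1 - lam) := by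
    intro t ht
    induction t, ht using Nat.le_induction with
    | base =>
      intro _
      simp only [funext hx₁, avg_const, sub_self]
      rw [← Pi.zero_def, WithLp.toLp_zero, norm_zero]
      positivity
    | succ t ht ih =>
      intro htT
      calc _ ≤ lam * ‖WithLp.toLp 2 (fun i => x t i - avg (x t))‖ + c :=
            norm_toLp_gossip_step_sub_avg_le hPsym hProw hspec hη (hG t) (hx t ht (by omega))
        _ ≤ lam * (c / (1 - lam)) + c := by gcongr; exact ih (by omega)
        _ = c / (1 - lam) := by field_simp; ring
  intro t h₁ h₂
  calc _ ≤ √(Fintype.card ι) * ‖WithLp.toLp 2 (fun i => x t i - avg (x t))‖ :=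
        sum_norm_le_sqrt_card_mul_norm_toLp _
    _ ≤ √(Fintype.card ι) * (c / (1 - lam)) := by gcongr; exact hdev t h₁ h₂
    _ = _ := by
        rw [mul_div_assoc']
        congr 1
        linear_combination (2 * η * L) * Real.mul_self_sqrt (Nat.cast_nonneg (Fintype.card ι))

theorem norm_avg_sub_avg_le_of_gossip_gradient_step (hPsym : ∀ i l, P i l = P l i)
    (hProw : ∀ i, ∑ l, P i l = 1) {β η : ℝ} (g g' : ι → H → H)
    (hcoco : ∀ i x y, β⁻¹ * ‖g i x - g i y‖ ^ 2 ≤ ⟪g i x - g i y, x - y⟫)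
    (hlip : ∀ i x y, ‖g i x - g i y‖ ≤ β * ‖x - y‖) (hβ : 0 < β) (hη : 0 ≤ η)
    (hηβ : η ≤ 2 / β) {x x' y y' : ι → H}
    (hx' : ∀ i, x' i = ∑ l, P i l • x l - η • g i (x i))
    (hy' : ∀ i, y' i = ∑ l, P i l • y l - η • g' i (y i)) {C D : ℝ}
    (hx : ∑ i, ‖x i - avg x‖ ≤ C) (hy : ∑ i, ‖y i - avg y‖ ≤ C)
    (hD : ∑ i, ‖g i (y i) - g' i (y i)‖ ≤ D) :
    ‖avg x' - avg y'‖ ≤ ‖avg x - avg y‖ + η * (Fintype.card ι : ℝ)⁻¹ * (2 * β * C + D) := by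
  rw [avg_gossip_step hPsym hProw hx', avg_gossip_step hPsym hProw hy']
  refine (norm_sub_smul_avg_sub_sub_smul_avg_le g g' hcoco hlip hβ hη hηβ _ _ x y).trans ?_
  gcongr
  linarith [mul_le_mul_of_nonneg_left hx hβ.le, mul_le_mul_of_nonneg_left hy hβ.le]

end Gossip

theorem le_add_sum_Icc_of_le_add {d b : ℕ → ℝ} {T : ℕ}
    (hstep : ∀ t, 1 ≤ t → t ≤ T → d (t + 1) ≤ d t + b t) :
    d (T + 1) ≤ d 1 + ∑ t ∈ Icc 1 T, b t := by
  induction T with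
  | zero => simp
  | succ T ih =>
    rw [sum_Icc_succ_top (by omega)]
    linarith [ih fun t h₁ h₂ => hstep t h₁ (by omega), hstep (T + 1) (by omega) le_rfl]

theorem sum_norm_sub_le_of_eq_off {ι κ Z X E : Type*} [Fintype ι] [DecidableEq κ]
    [SeminormedAddCommGroup E] (f' : Z → X → E) {L : ℝ} (hbd : ∀ z x, ‖f' z x‖ ≤ L)
    {r : ι} {k : κ} {S S' : ι → κ → Z} (hSS' : ∀ r' k', (r', k') ≠ (r, k) → S' r' k' = S r' k')
    (j : ι → κ) (y : ι → X) :
    ∑ i, ‖f' (S i (j i)) (y i) - f' (S' i (j i)) (y i)‖ ≤ 2 * L * if j r = k then 1 else 0 := by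
  have hoff : ∀ i, i ≠ r → ‖f' (S i (j i)) (y i) - f' (S' i (j i)) (y i)‖ = 0 := fun i hi => by
    rw [hSS' i (j i) fun h => hi (Prod.ext_iff.1 h).1, sub_self, norm_zero]
  rw [sum_eq_single r (fun i _ => hoff i) (by simp)]
  split_ifs with h
  · linarith [norm_sub_le (f' (S r (j r)) (y r)) (f' (S' r (j r)) (y r)),
      hbd (S r (j r)) (y r), hbd (S' r (j r)) (y r)]
  · rw [hSS' r (j r) fun e => h (Prod.ext_iff.1 e).2, sub_self, norm_zero, mul_zero]

theorem dsgd_stability_convex_constant_step_general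
    {H : Type*} [NormedAddCommGroup H] [InnerProductSpace ℝ H]
    {Z : Type*} (f : Z → H → ℝ) (f' : Z → H → H)
    (L β : ℝ)
    (hdiff : ∀ (z : Z) (x : H), HasFDerivAt (f z) ((innerSL ℝ) (f' z x)) x)
    (hlip : ∀ (z : Z) (x y : H), |f z x - f z y| ≤ L * ‖x - y‖)
    (hgradbd : ∀ (z : Z) (x : H), ‖f' z x‖ ≤ L)
    (hsmooth : ∀ (z : Z) (x y : H), ‖f' z x - f' z y‖ ≤ β * ‖x - y‖)
    (hconv : ∀ z : Z, ConvexOn ℝ Set.univ (f z))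
    (m n T : ℕ)
    (P : Fin m → Fin m → ℝ)
    (hPsym : ∀ i l, P i l = P l i)
    (hProw : ∀ i, ∑ l, P i l = 1)
    (lam : ℝ) (hlam0 : 0 ≤ lam) (hlam1 : lam < 1)
    (hspec : ∀ vv : Fin m → H, ∑ i, vv i = 0 →
      Real.sqrt (∑ i, ‖∑ l, P i l • vv l‖ ^ 2) ≤ lam * Real.sqrt (∑ i, ‖vv i‖ ^ 2))
    (r : Fin m) (k : Fin n)
    (S S' : Fin m → Fin n → Z)
    (hSS' : ∀ (r' : Fin m) (k' : Fin n), (r', k') ≠ (r, k) → S' r' k' = S r' k')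
    (j : ℕ → Fin m → Fin n)
    (η : ℝ) (hη0 : 0 < η) (hηβ : η ≤ 2 / β)
    (w₀ : H) (w v : ℕ → Fin m → H)
    (hw1 : ∀ i, w 1 i = w₀) (hv1 : ∀ i, v 1 i = w₀)
    (hwrec : ∀ t, 1 ≤ t → t ≤ T → ∀ i,
      w (t + 1) i = ∑ l, P i l • w t l - η • f' (S i (j t i)) (w t i))
    (hvrec : ∀ t, 1 ≤ t → t ≤ T → ∀ i,
      v (t + 1) i = ∑ l, P i l • v t l - η • f' (S' i (j t i)) (v t i))
    :
    ∀ z : Z,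
      |f z ((m : ℝ)⁻¹ • ∑ i, w (T + 1) i) - f z ((m : ℝ)⁻¹ • ∑ i, v (T + 1) i)| ≤
        4 * η ^ 2 * β * L ^ 2 * T / (1 - lam)
          + 2 * η * L ^ 2 / m * ∑ t ∈ Finset.Icc 1 T, (if j t r = k then (1 : ℝ) else 0) := by
  intro z
  have : Nonempty (Fin m) := ⟨r⟩
  have hm : (m : ℝ) ≠ 0 := Nat.cast_ne_zero.2 r.pos.ne'
  have hβ : 0 < β := (div_pos_iff_of_pos_left two_pos).1 (hη0.trans_le hηβ)
  have hL : 0 ≤ L := (norm_nonneg _).trans (hgradbd z w₀)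
  have hlam : 0 < 1 - lam := by linarith
  have hcons_w := sum_norm_sub_avg_le_of_gossip hPsym hProw hlam0 hlam1 hspec hη0.le
    (fun t i => hgradbd (S i (j t i)) (w t i)) hw1 hwrec
  have hcons_v := sum_norm_sub_avg_le_of_gossip hPsym hProw hlam0 hlam1 hspec hη0.le
    (fun t i => hgradbd (S' i (j t i)) (v t i)) hv1 hvrec
  have hstep : ∀ t, 1 ≤ t → t ≤ T → ‖avg (w (t + 1)) - avg (v (t + 1))‖
      ≤ ‖avg (w t) - avg (v t)‖
        + (4 * η ^ 2 * β * L / (1 - lam) + 2 * η * L / m * if j t r = k then 1 else 0) :=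
    fun t h₁ h₂ => (norm_avg_sub_avg_le_of_gossip_gradient_step hPsym hProw _ _
      (fun i => (hconv _).cocoercive_of_lipschitz_grad (hdiff _) (hsmooth _) hβ)
      (fun i => hsmooth _) hβ hη0.le hηβ (hwrec t h₁ h₂) (hvrec t h₁ h₂)
      (hcons_w t h₁ (by omega)) (hcons_v t h₁ (by omega))
      (sum_norm_sub_le_of_eq_off f' hgradbd hSS' (j t) (v t))).trans_eq
      (by rw [Fintype.card_fin]; field_simp; ring)
  have hT := le_add_sum_Icc_of_le_add (d := fun t => ‖avg (w t) - avg (v t)‖) hstep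
  simp only [funext hw1, funext hv1, sub_self, norm_zero, zero_add, avg_fin] at hT
  calc _ ≤ L * ‖(m : ℝ)⁻¹ • ∑ i, w (T + 1) i - (m : ℝ)⁻¹ • ∑ i, v (T + 1) i‖ := hlip z _ _
    _ ≤ L * ∑ t ∈ Icc 1 T,
          (4 * η ^ 2 * β * L / (1 - lam) + 2 * η * L / m * if j t r = k then 1 else 0) := by
        gcongr
    _ = _ := by
        rw [sum_add_distrib, sum_const, Nat.card_Icc, ← mul_sum, nsmul_eq_mul]
        push_cast
        field_simp

/-- convex case, constant stepsize `0 < η ≤ 2/β`. -/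
theorem dsgd_stability_convex_constant_step
    {H : Type*} [NormedAddCommGroup H] [InnerProductSpace ℝ H]
    {Z : Type*} (f : Z → H → ℝ) (f' : Z → H → H)
    (L β : ℝ) (hL : 0 < L) (hβ : 0 < β)
    (hdiff : ∀ (z : Z) (x : H), HasFDerivAt (f z) ((innerSL ℝ) (f' z x)) x)
    (hlip : ∀ (z : Z) (x y : H), |f z x - f z y| ≤ L * ‖x - y‖)
    (hgradbd : ∀ (z : Z) (x : H), ‖f' z x‖ ≤ L)
    (hsmooth : ∀ (z : Z) (x y : H), ‖f' z x - f' z y‖ ≤ β * ‖x - y‖)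
    (hconv : ∀ z : Z, ConvexOn ℝ Set.univ (f z))
    (m n T : ℕ) (hm : 1 ≤ m) (hn : 1 ≤ n) (hT : 1 ≤ T)
    (P : Fin m → Fin m → ℝ)
    (hPsym : ∀ i l, P i l = P l i)
    (hPpos : ∀ i l, 0 ≤ P i l)
    (hProw : ∀ i, ∑ l, P i l = 1)
    (lam : ℝ) (hlam0 : 0 ≤ lam) (hlam1 : lam < 1)
    (hspec : ∀ vv : Fin m → H, ∑ i, vv i = 0 →
      Real.sqrt (∑ i, ‖∑ l, P i l • vv l‖ ^ 2) ≤ lam * Real.sqrt (∑ i, ‖vv i‖ ^ 2))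
    (r : Fin m) (k : Fin n)
    (S S' : Fin m → Fin n → Z)
    (hSS' : ∀ (r' : Fin m) (k' : Fin n), (r', k') ≠ (r, k) → S' r' k' = S r' k')
    (j : ℕ → Fin m → Fin n)
    (η : ℝ) (hη0 : 0 < η) (hηβ : η ≤ 2 / β)
    (w₀ : H) (w v : ℕ → Fin m → H)
    (hw1 : ∀ i, w 1 i = w₀) (hv1 : ∀ i, v 1 i = w₀)
    (hwrec : ∀ t, 1 ≤ t → t ≤ T → ∀ i,
      w (t + 1) i = ∑ l, P i l • w t l - η • f' (S i (j t i)) (w t i))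
    (hvrec : ∀ t, 1 ≤ t → t ≤ T → ∀ i,
      v (t + 1) i = ∑ l, P i l • v t l - η • f' (S' i (j t i)) (v t i))
    :
    ∀ z : Z,
      |f z ((m : ℝ)⁻¹ • ∑ i, w (T + 1) i) - f z ((m : ℝ)⁻¹ • ∑ i, v (T + 1) i)| ≤
        4 * η ^ 2 * β * L ^ 2 * T / (1 - lam)
          + 2 * η * L ^ 2 / m * ∑ t ∈ Finset.Icc 1 T, (if j t r = k then (1 : ℝ) else 0) :=
  dsgd_stability_convex_constant_step_general f f' L β hdiff hlip hgradbd hsmooth hconv m n T P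
    hPsym hProw lam hlam0 hlam1 hspec r k S S' hSS' j η hη0 hηβ w₀ w v hw1 hv1 hwrec hvrec
end

section
/- Assume f is convex, L-Lipschitz and β-smooth, P is a gossip matrix with spectral bound λ ∈ [0, 1), and η_t = η for all t with 0 < η ≤ 2/β. Let w̄_avg = (1/(T+1)) ∑_{t=1}^{T+1} w̄^t and v̄_avg = (1/(T+1)) ∑_{t=1}^{T+1} v̄^t be the averaged-iterate outputs. Then for every z ∈ 𝒵, |f(w̄_avg; z) − f(v̄_avg; z)| ≤ 2η²βL²T/(1−λ) + (2ηL²/((T+1)m)) ∑_{t=1}^T (T+1−t) 𝟙[j_t(r)=k]. -/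
open scoped RealInnerProductSpace

open Finset

/-!
Gossiping with a doubly stochastic `P` preserves the network mean, so the means `w̄ᵗ`, `v̄ᵗ`
follow `w̄ᵗ⁺¹ = w̄ᵗ - η · meanᵢ ∇f(wᵗ(i); zᵢ)`. Evaluated at the means themselves this is a
gradient step on an average of convex `β`-smooth losses, whose gradient is `1/β`-cocoercive,
so the step is nonexpansive for `η ≤ 2/β`. What remains is a perturbation: the local iterates
stay within `η √m L / (1 - λ)` of their mean in `ℓ²` (the spectral gap contracts the deviation,
each gradient step adds at most `η √m L`), which costs `2η²βL/(1 - λ)` per step, and the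
differing sample is drawn only when `j_t(r) = k`, at a cost of `2ηL/m`. Summing these
increments, averaging over `t` and using that `f(·; z)` is `L`-Lipschitz gives the bound.
-/

section Gradient

variable {H : Type*} [NormedAddCommGroup H] [InnerProductSpace ℝ H] {φ : H → ℝ} {g : H → H}
  {β : ℝ}

theorem hasDerivAt_comp_lineMap_of_gradient (hφ : ∀ x, HasFDerivAt φ (innerSL ℝ (g x)) x)
    (x y : H) (s : ℝ) :
    HasDerivAt (fun s => φ (AffineMap.lineMap x y s)) ⟪g (AffineMap.lineMap x y s), y - x⟫ s :=
  (hφ _).comp_hasDerivAt s AffineMap.hasDerivAt_lineMap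

theorem ConvexOn.add_inner_gradient_le (hconv : ConvexOn ℝ Set.univ φ)
    (hφ : ∀ x, HasFDerivAt φ (innerSL ℝ (g x)) x) (x y : H) :
    φ x + ⟪g x, y - x⟫ ≤ φ y := by
  have hline : ConvexOn ℝ Set.univ (fun s : ℝ => φ (AffineMap.lineMap x y s)) := by
    have := hconv.comp_affineMap (AffineMap.lineMap x y : ℝ →ᵃ[ℝ] H)
    rwa [Set.preimage_univ] at this
  have := hline.le_slope_of_hasDerivAt (Set.mem_univ 0) (Set.mem_univ 1) zero_lt_one
    (hasDerivAt_comp_lineMap_of_gradient hφ x y 0)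
  simp only [AffineMap.lineMap_apply_zero, AffineMap.lineMap_apply_one, slope_def_field,
    sub_zero, div_one] at this
  linarith

theorem le_add_inner_gradient_add_sq (hφ : ∀ x, HasFDerivAt φ (innerSL ℝ (g x)) x)
    (hg : ∀ x y, ‖g x - g y‖ ≤ β * ‖x - y‖) (x y : H) :
    φ y ≤ φ x + ⟪g x, y - x⟫ + β / 2 * ‖y - x‖ ^ 2 := by
  set h : ℝ → ℝ := fun s => φ (AffineMap.lineMap x y s) - φ x - s * ⟪g x, y - x⟫
  have hh : ∀ s, HasDerivAt h (⟪g (AffineMap.lineMap x y s) - g x, y - x⟫) s := by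
    intro s
    refine (((hasDerivAt_comp_lineMap_of_gradient hφ x y s).sub_const (φ x)).sub
      ((hasDerivAt_id s).mul_const ⟪g x, y - x⟫)).congr_deriv ?_
    rw [inner_sub_left, one_mul]
  have hB : ∀ s : ℝ, HasDerivAt (fun s => β / 2 * ‖y - x‖ ^ 2 * s ^ 2)
      (β * ‖y - x‖ ^ 2 * s) s := by
    intro s
    refine ((hasDerivAt_pow 2 s).const_mul (β / 2 * ‖y - x‖ ^ 2)).congr_deriv ?_
    ring
  have hbound : ∀ s ∈ Set.Ico (0 : ℝ) 1,
      ⟪g (AffineMap.lineMap x y s) - g x, y - x⟫ ≤ β * ‖y - x‖ ^ 2 * s := by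
    rintro s ⟨hs, -⟩
    calc ⟪g (AffineMap.lineMap x y s) - g x, y - x⟫
        ≤ ‖g (AffineMap.lineMap x y s) - g x‖ * ‖y - x‖ := real_inner_le_norm _ _
      _ ≤ β * ‖AffineMap.lineMap x y s - x‖ * ‖y - x‖ := by gcongr; exact hg _ _
      _ = β * ‖y - x‖ ^ 2 * s := by
        rw [← vsub_eq_sub, AffineMap.lineMap_vsub_left, vsub_eq_sub, norm_smul,
          Real.norm_of_nonneg hs]
        ring
  have := image_le_of_deriv_right_le_deriv_boundary
    (fun s _ => (hh s).continuousAt.continuousWithinAt)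
    (fun s _ => (hh s).hasDerivWithinAt) (by simp [h])
    (fun s _ => (hB s).continuousAt.continuousWithinAt)
    (fun s _ => (hB s).hasDerivWithinAt) hbound (Set.right_mem_Icc.2 zero_le_one)
  simp only [AffineMap.lineMap_apply_one, one_mul, one_pow, mul_one, h] at this
  linarith

theorem ConvexOn.add_inner_gradient_add_sq_le (hconv : ConvexOn ℝ Set.univ φ)
    (hφ : ∀ x, HasFDerivAt φ (innerSL ℝ (g x)) x) (hβ : 0 < β)
    (hg : ∀ x y, ‖g x - g y‖ ≤ β * ‖x - y‖) (x y : H) :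
    φ x + ⟪g x, y - x⟫ + (2 * β)⁻¹ * ‖g y - g x‖ ^ 2 ≤ φ y := by
  set d := g y - g x
  -- the first-order and descent inequalities meet at the gradient step from `y`
  set z := y - β⁻¹ • d
  have hx := hconv.add_inner_gradient_le hφ x z
  have hy := le_add_inner_gradient_add_sq hφ hg y z
  rw [show z - x = (y - x) - β⁻¹ • d by simp only [z]; abel, inner_sub_right,
    inner_smul_right] at hx
  rw [show z - y = -(β⁻¹ • d) by simp only [z]; abel, inner_neg_right, inner_smul_right,
    norm_neg, norm_smul, mul_pow, Real.norm_eq_abs, sq_abs] at hy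
  have hd : ⟪g y, d⟫ - ⟪g x, d⟫ = ‖d‖ ^ 2 := by
    rw [← inner_sub_left, real_inner_self_eq_norm_sq]
  have hβ' : β / 2 * β⁻¹ ^ 2 = β⁻¹ - (2 * β)⁻¹ := by field_simp; ring
  rw [← mul_assoc, hβ'] at hy
  linear_combination hx + hy - β⁻¹ * hd

theorem ConvexOn.gradient_cocoercive (hconv : ConvexOn ℝ Set.univ φ)
    (hφ : ∀ x, HasFDerivAt φ (innerSL ℝ (g x)) x) (hβ : 0 < β)
    (hg : ∀ x y, ‖g x - g y‖ ≤ β * ‖x - y‖) (x y : H) :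
    β⁻¹ * ‖g x - g y‖ ^ 2 ≤ ⟪g x - g y, x - y⟫ := by
  have hxy := hconv.add_inner_gradient_add_sq_le hφ hβ hg x y
  have hyx := hconv.add_inner_gradient_add_sq_le hφ hβ hg y x
  rw [norm_sub_rev] at hxy
  have hinner : ⟪g x, y - x⟫ + ⟪g y, x - y⟫ = -⟪g x - g y, x - y⟫ := by
    rw [← neg_sub x y, inner_neg_right, inner_sub_left]; ring
  have hβ' : β⁻¹ = (2 * β)⁻¹ + (2 * β)⁻¹ := by field_simp; ring
  rw [hβ']
  linarith

theorem norm_sub_smul_le_of_cocoercive {β η : ℝ} {u d : H} (hd : β⁻¹ * ‖d‖ ^ 2 ≤ ⟪d, u⟫)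
    (hη0 : 0 ≤ η) (hη : η ≤ 2 / β) : ‖u - η • d‖ ≤ ‖u‖ := by
  have hexpand : ‖u - η • d‖ ^ 2 = ‖u‖ ^ 2 - 2 * η * ⟪d, u⟫ + η ^ 2 * ‖d‖ ^ 2 := by
    rw [norm_sub_sq_real, inner_smul_right, norm_smul, mul_pow, Real.norm_eq_abs, sq_abs,
      real_inner_comm]
    ring
  have hslack : 0 ≤ η * (2 * β⁻¹ - η) * ‖d‖ ^ 2 := by
    have := sub_nonneg.2 hη
    rw [div_eq_mul_inv] at this
    positivity
  rw [← sq_le_sq₀ (norm_nonneg _) (norm_nonneg _), hexpand]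
  linear_combination 2 * η * hd + hslack

end Gradient

section Normed

variable {E : Type*} [SeminormedAddCommGroup E] {ι : Type*} [Fintype ι]

theorem sqrt_sum_norm_sub_sq_le (x y : ι → E) :
    √(∑ i, ‖x i - y i‖ ^ 2) ≤ √(∑ i, ‖x i‖ ^ 2) + √(∑ i, ‖y i‖ ^ 2) := by
  simpa [PiLp.norm_eq_of_L2] using
    norm_sub_le (WithLp.toLp 2 x : PiLp 2 fun _ : ι => E) (WithLp.toLp 2 y)

theorem sum_norm_le_sqrt_card_mul (x : ι → E) :
    ∑ i, ‖x i‖ ≤ √(Fintype.card ι) * √(∑ i, ‖x i‖ ^ 2) := by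
  rw [← Real.sqrt_mul (Nat.cast_nonneg _)]
  refine Real.le_sqrt_of_sq_le ?_
  simpa using sq_sum_le_card_mul_sum_sq (s := univ) (f := fun i => ‖x i‖)

end Normed

section Averaging

theorem le_sum_Icc_of_le_add {D c : ℕ → ℝ} {T : ℕ} (h1 : D 1 ≤ 0)
    (hD : ∀ t ∈ Icc 1 T, D (t + 1) ≤ D t + c t) :
    ∀ t ≤ T, D (t + 1) ≤ ∑ s ∈ Icc 1 t, c s := by
  intro t ht
  induction t with
  | zero => simpa using h1
  | succ t ih =>
    rw [sum_Icc_succ_top (by omega)]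
    linarith [ih (by omega), hD (t + 1) (mem_Icc.2 ⟨by omega, ht⟩)]

theorem sum_Icc_le_sum_mul_of_le_add {D c : ℕ → ℝ} {T : ℕ} (h1 : D 1 ≤ 0)
    (hD : ∀ t ∈ Icc 1 T, D (t + 1) ≤ D t + c t) :
    ∑ t ∈ Icc 1 (T + 1), D t ≤ ∑ s ∈ Icc 1 T, ((T : ℝ) + 1 - s) * c s := by
  induction T with
  | zero => simpa using h1
  | succ T ih =>
    have hD' : ∀ t ∈ Icc 1 T, D (t + 1) ≤ D t + c t :=
      fun t ht => hD t (mem_Icc.2 ⟨(mem_Icc.1 ht).1, by linarith [(mem_Icc.1 ht).2]⟩)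
    have hlast := le_sum_Icc_of_le_add h1 hD (T + 1) le_rfl
    have hweights : ∑ s ∈ Icc 1 (T + 1), ((↑(T + 1) : ℝ) + 1 - s) * c s =
        ∑ s ∈ Icc 1 T, ((T : ℝ) + 1 - s) * c s + ∑ s ∈ Icc 1 (T + 1), c s := by
      rw [sum_Icc_succ_top (by omega : 1 ≤ T + 1), sum_Icc_succ_top (by omega : 1 ≤ T + 1),
        ← add_assoc, ← sum_add_distrib]
      push_cast
      congr 1
      · exact sum_congr rfl fun s _ => by ring
      · ring
    rw [sum_Icc_succ_top (by omega), hweights]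
    linarith [ih hD']

variable {E : Type*} [SeminormedAddCommGroup E] [NormedSpace ℝ E]

theorem norm_average_sub_le_of_le_add {a b : ℕ → E} {T : ℕ} {C K : ℝ} {χ : ℕ → ℝ} (hC : 0 ≤ C)
    (h1 : a 1 = b 1)
    (hstep : ∀ t ∈ Icc 1 T, ‖a (t + 1) - b (t + 1)‖ ≤ ‖a t - b t‖ + (C + K * χ t)) :
    ‖((T : ℝ) + 1)⁻¹ • ∑ t ∈ Icc 1 (T + 1), a t - ((T : ℝ) + 1)⁻¹ • ∑ t ∈ Icc 1 (T + 1), b t‖ ≤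
      C * T + K / (T + 1) * ∑ s ∈ Icc 1 T, ((T : ℝ) + 1 - s) * χ s := by
  have hsum := sum_Icc_le_sum_mul_of_le_add (D := fun t => ‖a t - b t‖)
    (by simp [h1]) hstep
  have hweights : ∑ s ∈ Icc 1 T, ((T : ℝ) + 1 - s) ≤ T * (T + 1) :=
    calc _ ≤ ∑ s ∈ Icc 1 T, ((T : ℝ) + 1) :=
          sum_le_sum fun s _ => by linarith [s.cast_nonneg (α := ℝ)]
      _ = T * (T + 1) := by simp; ring
  rw [← smul_sub, ← sum_sub_distrib, norm_smul, Real.norm_of_nonneg (by positivity)]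
  calc _ ≤ ((T : ℝ) + 1)⁻¹ * ∑ s ∈ Icc 1 T, ((T : ℝ) + 1 - s) * (C + K * χ s) := by
        gcongr
        exact (norm_sum_le _ _).trans hsum
    _ = ((T : ℝ) + 1)⁻¹ * (C * ∑ s ∈ Icc 1 T, ((T : ℝ) + 1 - s) +
          K * ∑ s ∈ Icc 1 T, ((T : ℝ) + 1 - s) * χ s) := by
        congr 1
        rw [mul_sum, mul_sum, ← sum_add_distrib]
        exact sum_congr rfl fun s _ => by ring
    _ ≤ ((T : ℝ) + 1)⁻¹ * (C * (T * (T + 1)) + K * ∑ s ∈ Icc 1 T, ((T : ℝ) + 1 - s) * χ s) := by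
        gcongr
    _ = _ := by field_simp

end Averaging

namespace DSGD

variable {H : Type*} [NormedAddCommGroup H] [InnerProductSpace ℝ H] {m : ℕ}
  {P : Fin m → Fin m → ℝ} {η β : ℝ} {G G' : Fin m → H → H}

noncomputable def mean (x : Fin m → H) : H := (m : ℝ)⁻¹ • ∑ i, x i

noncomputable def consensusError (x : Fin m → H) : ℝ := √(∑ i, ‖x i - mean x‖ ^ 2)

def step (P : Fin m → Fin m → ℝ) (η : ℝ) (G : Fin m → H → H) (x : Fin m → H) : Fin m → H :=
  fun i => ∑ l, P i l • x l - η • G i (x i)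

theorem mean_const (hm : 0 < m) (c : H) : mean (fun _ : Fin m => c) = c := by
  rw [mean, sum_const, card_univ, Fintype.card_fin, ← Nat.cast_smul_eq_nsmul ℝ, smul_smul,
    inv_mul_cancel₀ (by positivity), one_smul]

theorem consensusError_const (c : H) : consensusError (fun _ : Fin m => c) = 0 := by
  rcases Nat.eq_zero_or_pos m with rfl | hm
  · simp [consensusError]
  simp [consensusError, mean_const hm]

theorem sum_sub_mean (x : Fin m → H) : ∑ i, (x i - mean x) = 0 := by
  rcases Nat.eq_zero_or_pos m with rfl | hm
  · simp
  rw [sum_sub_distrib, sum_const, card_univ, Fintype.card_fin, ← Nat.cast_smul_eq_nsmul ℝ, mean,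
    smul_smul, mul_inv_cancel₀ (by positivity), one_smul, sub_self]

theorem norm_mean_le (x : Fin m → H) : ‖mean x‖ ≤ (m : ℝ)⁻¹ * ∑ i, ‖x i‖ := by
  rw [mean, norm_smul, norm_inv, RCLike.norm_natCast]
  gcongr
  exact norm_sum_le _ _

theorem sq_norm_mean_le (x : Fin m → H) : ‖mean x‖ ^ 2 ≤ (m : ℝ)⁻¹ * ∑ i, ‖x i‖ ^ 2 := by
  rcases Nat.eq_zero_or_pos m with rfl | hm
  · simp [mean]
  have hcs := sq_sum_le_card_mul_sum_sq (s := univ) (f := fun i => ‖x i‖)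
  simp only [card_univ, Fintype.card_fin] at hcs
  calc ‖mean x‖ ^ 2 ≤ ((m : ℝ)⁻¹ * ∑ i, ‖x i‖) ^ 2 := by gcongr; exact norm_mean_le x
    _ = (m : ℝ)⁻¹ * ((m : ℝ)⁻¹ * (∑ i, ‖x i‖) ^ 2) := by ring
    _ ≤ (m : ℝ)⁻¹ * ((m : ℝ)⁻¹ * ((m : ℝ) * ∑ i, ‖x i‖ ^ 2)) := by gcongr
    _ = (m : ℝ)⁻¹ * ∑ i, ‖x i‖ ^ 2 := by field_simp

theorem sum_norm_sub_mean_sq_le (x : Fin m → H) :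
    ∑ i, ‖x i - mean x‖ ^ 2 ≤ ∑ i, ‖x i‖ ^ 2 := by
  have hsplit : ∀ i, ‖x i‖ ^ 2 = ‖x i - mean x‖ ^ 2 + 2 * ⟪x i - mean x, mean x⟫ + ‖mean x‖ ^ 2 :=
    fun i => by rw [← norm_add_sq_real, sub_add_cancel]
  rw [sum_congr rfl fun i _ => hsplit i, sum_add_distrib, sum_add_distrib, ← mul_sum, ← sum_inner,
    sum_sub_mean, inner_zero_left, mul_zero, add_zero, le_add_iff_nonneg_right]
  positivity

theorem sum_norm_sub_mean_le (x : Fin m → H) :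
    ∑ i, ‖x i - mean x‖ ≤ √m * consensusError x := by
  have := sum_norm_le_sqrt_card_mul fun i => x i - mean x
  rwa [Fintype.card_fin] at this

theorem inv_mul_sq_norm_mean_le_inner (hβ : 0 ≤ β) {d : Fin m → H} {u : H}
    (hd : ∀ i, β⁻¹ * ‖d i‖ ^ 2 ≤ ⟪d i, u⟫) : β⁻¹ * ‖mean d‖ ^ 2 ≤ ⟪mean d, u⟫ :=
  calc β⁻¹ * ‖mean d‖ ^ 2 ≤ β⁻¹ * ((m : ℝ)⁻¹ * ∑ i, ‖d i‖ ^ 2) := by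
        gcongr; exact sq_norm_mean_le d
    _ = (m : ℝ)⁻¹ * ∑ i, β⁻¹ * ‖d i‖ ^ 2 := by rw [mul_left_comm, mul_sum]
    _ ≤ (m : ℝ)⁻¹ * ∑ i, ⟪d i, u⟫ := by gcongr with i; exact hd i
    _ = ⟪mean d, u⟫ := by rw [mean, real_inner_smul_left, sum_inner]

theorem mean_step (hcol : ∀ l, ∑ i, P i l = 1) (x : Fin m → H) :
    mean (step P η G x) = mean x - η • mean (fun i => G i (x i)) := by
  have hgossip : ∑ i, ∑ l, P i l • x l = ∑ l, x l := by
    rw [sum_comm]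
    simp only [← sum_smul, hcol, one_smul]
  simp only [mean, step, sum_sub_distrib, hgossip, ← smul_sum, smul_sub, smul_comm η]

theorem step_sub_mean (hrow : ∀ i, ∑ l, P i l = 1) (hcol : ∀ l, ∑ i, P i l = 1)
    (x : Fin m → H) (i : Fin m) :
    step P η G x i - mean (step P η G x) =
      ∑ l, P i l • (x l - mean x) - η • (G i (x i) - mean fun i => G i (x i)) := by
  simp only [mean_step hcol, step, smul_sub, sum_sub_distrib, ← sum_smul, hrow, one_smul]
  abel

theorem consensusError_step_le (hrow : ∀ i, ∑ l, P i l = 1) (hcol : ∀ l, ∑ i, P i l = 1)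
    {lam : ℝ} (hspec : ∀ u : Fin m → H, ∑ i, u i = 0 →
      √(∑ i, ‖∑ l, P i l • u l‖ ^ 2) ≤ lam * √(∑ i, ‖u i‖ ^ 2))
    (hη : 0 ≤ η) (x : Fin m → H) :
    consensusError (step P η G x) ≤
      lam * consensusError x + η * √(∑ i, ‖G i (x i)‖ ^ 2) := by
  set g := fun i => G i (x i)
  have hscale : √(∑ i, ‖η • (g i - mean g)‖ ^ 2) = η * consensusError g := by
    simp only [norm_smul, Real.norm_of_nonneg hη, mul_pow, ← mul_sum,
      Real.sqrt_mul (sq_nonneg η), Real.sqrt_sq hη, consensusError]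
  calc consensusError (step P η G x)
      = √(∑ i, ‖∑ l, P i l • (x l - mean x) - η • (g i - mean g)‖ ^ 2) := by
        simp only [consensusError, step_sub_mean hrow hcol, g]
    _ ≤ √(∑ i, ‖∑ l, P i l • (x l - mean x)‖ ^ 2) + η * consensusError g := by
        rw [← hscale]; exact sqrt_sum_norm_sub_sq_le _ _
    _ ≤ lam * consensusError x + η * √(∑ i, ‖g i‖ ^ 2) := by
        gcongr
        · exact hspec _ (sum_sub_mean x)
        · exact Real.sqrt_le_sqrt (sum_norm_sub_mean_sq_le g)

theorem consensusError_le (hrow : ∀ i, ∑ l, P i l = 1) (hcol : ∀ l, ∑ i, P i l = 1)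
    {lam : ℝ} (hspec : ∀ u : Fin m → H, ∑ i, u i = 0 →
      √(∑ i, ‖∑ l, P i l • u l‖ ^ 2) ≤ lam * √(∑ i, ‖u i‖ ^ 2))
    (hlam0 : 0 ≤ lam) (hlam1 : lam < 1) (hη : 0 ≤ η) {L : ℝ} (hL : 0 ≤ L)
    {G : ℕ → Fin m → H → H} (hG : ∀ t i y, ‖G t i y‖ ≤ L) {T : ℕ} {w₀ : H}
    {w : ℕ → Fin m → H} (hw1 : w 1 = fun _ => w₀)
    (hrec : ∀ t ∈ Icc 1 T, w (t + 1) = step P η (G t) (w t)) :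
    ∀ t ∈ Icc 1 (T + 1), consensusError (w t) ≤ η * (√m * L) / (1 - lam) := by
  have hgap : 0 < 1 - lam := sub_pos.2 hlam1
  intro t ht
  obtain ⟨ht1, htT⟩ := mem_Icc.1 ht
  induction t, ht1 using Nat.le_induction with
  | base =>
    rw [hw1, consensusError_const]
    positivity
  | succ t ht1 ih =>
    have hgrad : √(∑ i, ‖G t i (w t i)‖ ^ 2) ≤ √m * L :=
      calc √(∑ i, ‖G t i (w t i)‖ ^ 2) ≤ √(∑ _i : Fin m, L ^ 2) :=
            Real.sqrt_le_sqrt (sum_le_sum fun i _ => by gcongr; exact hG t i _)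
        _ = √m * L := by
          rw [sum_const, card_univ, Fintype.card_fin, nsmul_eq_mul,
            Real.sqrt_mul (Nat.cast_nonneg _), Real.sqrt_sq hL]
    calc consensusError (w (t + 1))
        ≤ lam * consensusError (w t) + η * √(∑ i, ‖G t i (w t i)‖ ^ 2) := by
          rw [hrec t (mem_Icc.2 ⟨ht1, by omega⟩)]
          exact consensusError_step_le hrow hcol hspec hη _
      _ ≤ lam * (η * (√m * L) / (1 - lam)) + η * (√m * L) := by
          gcongr
          exact ih (mem_Icc.2 ⟨ht1, by omega⟩) (by omega)
      _ = η * (√m * L) / (1 - lam) := by field_simp; ring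

theorem sum_norm_perturbation_le (hG : ∀ i a b, ‖G i a - G i b‖ ≤ β * ‖a - b‖)
    (hG' : ∀ i a b, ‖G' i a - G' i b‖ ≤ β * ‖a - b‖) (hβ : 0 ≤ β) (x y : Fin m → H) :
    ∑ i, ‖G i (x i) - G' i (y i) - (G i (mean x) - G i (mean y))‖ ≤
      β * √m * (consensusError x + consensusError y) +
        ∑ i, ‖G i (mean y) - G' i (mean y)‖ := by
  have hterm : ∀ i, ‖G i (x i) - G' i (y i) - (G i (mean x) - G i (mean y))‖ ≤
      β * ‖x i - mean x‖ + β * ‖y i - mean y‖ + ‖G i (mean y) - G' i (mean y)‖ := by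
    intro i
    calc ‖G i (x i) - G' i (y i) - (G i (mean x) - G i (mean y))‖
        = ‖(G i (x i) - G i (mean x)) - (G' i (y i) - G' i (mean y)) +
            (G i (mean y) - G' i (mean y))‖ := by congr 1; abel
      _ ≤ ‖G i (x i) - G i (mean x)‖ + ‖G' i (y i) - G' i (mean y)‖ +
            ‖G i (mean y) - G' i (mean y)‖ :=
          (norm_add_le _ _).trans (by gcongr; exact norm_sub_le _ _)
      _ ≤ _ := by gcongr <;> apply_assumption
  calc _ ≤ ∑ i, (β * ‖x i - mean x‖ + β * ‖y i - mean y‖ + ‖G i (mean y) - G' i (mean y)‖) :=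
        sum_le_sum fun i _ => hterm i
    _ = β * ∑ i, ‖x i - mean x‖ + β * ∑ i, ‖y i - mean y‖ +
          ∑ i, ‖G i (mean y) - G' i (mean y)‖ := by
        rw [sum_add_distrib, sum_add_distrib, mul_sum, mul_sum]
    _ ≤ β * (√m * consensusError x) + β * (√m * consensusError y) +
          ∑ i, ‖G i (mean y) - G' i (mean y)‖ := by
        gcongr <;> exact sum_norm_sub_mean_le _
    _ = _ := by ring

theorem norm_mean_step_sub_le (hcol : ∀ l, ∑ i, P i l = 1)
    (hGco : ∀ i a b, β⁻¹ * ‖G i a - G i b‖ ^ 2 ≤ ⟪G i a - G i b, a - b⟫)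
    (hG : ∀ i a b, ‖G i a - G i b‖ ≤ β * ‖a - b‖)
    (hG' : ∀ i a b, ‖G' i a - G' i b‖ ≤ β * ‖a - b‖) (hβ : 0 ≤ β) (hη0 : 0 ≤ η)
    (hη : η ≤ 2 / β) (x y : Fin m → H) :
    ‖mean (step P η G x) - mean (step P η G' y)‖ ≤ ‖mean x - mean y‖ +
      η * (m : ℝ)⁻¹ * (β * √m * (consensusError x + consensusError y) +
        ∑ i, ‖G i (mean y) - G' i (mean y)‖) := by
  set d : Fin m → H := fun i => G i (mean x) - G i (mean y)
  set e : Fin m → H := fun i => G i (x i) - G' i (y i) - d i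
  have hde : mean (fun i => G i (x i)) - mean (fun i => G' i (y i)) = mean d + mean e := by
    simp only [mean, ← smul_sub, ← smul_add, ← sum_sub_distrib, ← sum_add_distrib, e,
      add_sub_cancel]
  have hsplit : mean (step P η G x) - mean (step P η G' y) =
      (mean x - mean y - η • mean d) - η • mean e := by
    rw [mean_step hcol, mean_step hcol]
    calc _ = mean x - mean y - η • (mean (fun i => G i (x i)) - mean fun i => G' i (y i)) := by
          rw [smul_sub]; abel
      _ = _ := by rw [hde, smul_add]; abel
  calc _ ≤ ‖mean x - mean y - η • mean d‖ + η * ‖mean e‖ := by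
        rw [hsplit]
        refine (norm_sub_le _ _).trans_eq ?_
        rw [norm_smul, Real.norm_of_nonneg hη0]
    _ ≤ ‖mean x - mean y‖ + η * ((m : ℝ)⁻¹ * ∑ i, ‖e i‖) := by
        gcongr
        · exact norm_sub_smul_le_of_cocoercive
            (inv_mul_sq_norm_mean_le_inner hβ fun i => hGco i _ _) hη0 hη
        · exact norm_mean_le e
    _ ≤ _ := by
        rw [mul_assoc]
        gcongr
        exact sum_norm_perturbation_le hG hG' hβ x y

theorem sum_norm_sub_neighbour_le {E : Type*} [SeminormedAddCommGroup E] {Z : Type*} {n : ℕ}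
    {S S' : Fin m → Fin n → Z} {r : Fin m} {k : Fin n}
    (hSS' : ∀ r' k', (r', k') ≠ (r, k) → S' r' k' = S r' k') {g : Z → E} {L : ℝ}
    (hg : ∀ z, ‖g z‖ ≤ L) (J : Fin m → Fin n) :
    ∑ i, ‖g (S i (J i)) - g (S' i (J i))‖ ≤ 2 * L * if J r = k then 1 else 0 := by
  rw [sum_eq_single r (fun i _ hi => by rw [hSS' i (J i) (by simp [hi]), sub_self, norm_zero])
    (by simp)]
  split_ifs with hJ
  · linarith [norm_sub_le (g (S r (J r))) (g (S' r (J r))), hg (S r (J r)), hg (S' r (J r))]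
  · rw [hSS' r (J r) (by simp [hJ]), sub_self, norm_zero, mul_zero]

end DSGD

open DSGD

theorem dsgd_stability_convex_averaged_general
    {H : Type*} [NormedAddCommGroup H] [InnerProductSpace ℝ H]
    {Z : Type*} (f : Z → H → ℝ) (f' : Z → H → H)
    (L β : ℝ) (hL : 0 < L) (hβ : 0 < β)
    (hdiff : ∀ (z : Z) (x : H), HasFDerivAt (f z) ((innerSL ℝ) (f' z x)) x)
    (hlip : ∀ (z : Z) (x y : H), |f z x - f z y| ≤ L * ‖x - y‖)
    (hgradbd : ∀ (z : Z) (x : H), ‖f' z x‖ ≤ L)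
    (hsmooth : ∀ (z : Z) (x y : H), ‖f' z x - f' z y‖ ≤ β * ‖x - y‖)
    (hconv : ∀ z : Z, ConvexOn ℝ Set.univ (f z))
    (m n T : ℕ) (hm : 1 ≤ m)
    (P : Fin m → Fin m → ℝ)
    (hPsym : ∀ i l, P i l = P l i)
    (hProw : ∀ i, ∑ l, P i l = 1)
    (lam : ℝ) (hlam0 : 0 ≤ lam) (hlam1 : lam < 1)
    (hspec : ∀ vv : Fin m → H, ∑ i, vv i = 0 →
      Real.sqrt (∑ i, ‖∑ l, P i l • vv l‖ ^ 2) ≤ lam * Real.sqrt (∑ i, ‖vv i‖ ^ 2))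
    (r : Fin m) (k : Fin n)
    (S S' : Fin m → Fin n → Z)
    (hSS' : ∀ (r' : Fin m) (k' : Fin n), (r', k') ≠ (r, k) → S' r' k' = S r' k')
    (j : ℕ → Fin m → Fin n)
    (η : ℝ) (hη0 : 0 < η) (hηβ : η ≤ 2 / β)
    (w₀ : H) (w v : ℕ → Fin m → H)
    (hw1 : ∀ i, w 1 i = w₀) (hv1 : ∀ i, v 1 i = w₀)
    (hwrec : ∀ t, 1 ≤ t → t ≤ T → ∀ i,
      w (t + 1) i = ∑ l, P i l • w t l - η • f' (S i (j t i)) (w t i))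
    (hvrec : ∀ t, 1 ≤ t → t ≤ T → ∀ i,
      v (t + 1) i = ∑ l, P i l • v t l - η • f' (S' i (j t i)) (v t i))
    :
    ∀ z : Z,
      |f z (((T : ℝ) + 1)⁻¹ • ∑ t ∈ Finset.Icc 1 (T + 1), (m : ℝ)⁻¹ • ∑ i, w t i) -
          f z (((T : ℝ) + 1)⁻¹ • ∑ t ∈ Finset.Icc 1 (T + 1), (m : ℝ)⁻¹ • ∑ i, v t i)| ≤
        2 * η ^ 2 * β * L ^ 2 * T / (1 - lam)
          + 2 * η * L ^ 2 / (((T : ℝ) + 1) * m) *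
            ∑ t ∈ Finset.Icc 1 T, ((T : ℝ) + 1 - (t : ℝ)) * (if j t r = k then (1 : ℝ) else 0) := by
  intro z
  have hcol : ∀ l, ∑ i, P i l = 1 := fun l => by simpa only [hPsym] using hProw l
  have hwstep : ∀ t ∈ Icc 1 T, w (t + 1) = step P η (fun i => f' (S i (j t i))) (w t) :=
    fun t ht => funext (hwrec t (mem_Icc.1 ht).1 (mem_Icc.1 ht).2)
  have hvstep : ∀ t ∈ Icc 1 T, v (t + 1) = step P η (fun i => f' (S' i (j t i))) (v t) :=
    fun t ht => funext (hvrec t (mem_Icc.1 ht).1 (mem_Icc.1 ht).2)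
  have hwcons := consensusError_le hProw hcol hspec hlam0 hlam1 hη0.le hL.le
    (G := fun t i => f' (S i (j t i))) (fun _ _ => hgradbd _) (funext hw1) hwstep
  have hvcons := consensusError_le hProw hcol hspec hlam0 hlam1 hη0.le hL.le
    (G := fun t i => f' (S' i (j t i))) (fun _ _ => hgradbd _) (funext hv1) hvstep
  set ε := η * (√m * L) / (1 - lam) with hε
  have hstep : ∀ t ∈ Icc 1 T, ‖mean (w (t + 1)) - mean (v (t + 1))‖ ≤
      ‖mean (w t) - mean (v t)‖ + (η * (m : ℝ)⁻¹ * (β * √m * (ε + ε)) +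
        η * (m : ℝ)⁻¹ * (2 * L) * if j t r = k then 1 else 0) := by
    intro t ht
    have ht' : t ∈ Icc 1 (T + 1) := mem_Icc.2 ⟨(mem_Icc.1 ht).1, by linarith [(mem_Icc.1 ht).2]⟩
    rw [hwstep t ht, hvstep t ht, mul_assoc _ (2 * L), ← mul_add]
    refine (norm_mean_step_sub_le hcol
      (fun i => (hconv _).gradient_cocoercive (hdiff _) hβ (hsmooth _))
      (fun i => hsmooth _) (fun i => hsmooth _) hβ.le hη0.le hηβ _ _).trans ?_
    gcongr
    exacts [hwcons t ht', hvcons t ht', sum_norm_sub_neighbour_le hSS' (hgradbd · _) (j t)]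
  calc _ ≤ L * ‖((T : ℝ) + 1)⁻¹ • ∑ t ∈ Icc 1 (T + 1), mean (w t) -
        ((T : ℝ) + 1)⁻¹ • ∑ t ∈ Icc 1 (T + 1), mean (v t)‖ := hlip z _ _
    _ ≤ L * (η * (m : ℝ)⁻¹ * (β * √m * (ε + ε)) * T + η * (m : ℝ)⁻¹ * (2 * L) / (T + 1) *
          ∑ s ∈ Icc 1 T, ((T : ℝ) + 1 - s) * if j s r = k then 1 else 0) := by
        gcongr
        exact norm_average_sub_le_of_le_add (by positivity)
          (congrArg mean (funext fun i => (hw1 i).trans (hv1 i).symm)) hstep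
    _ = _ := by
        rw [hε]
        field_simp
        rw [Real.sq_sqrt (Nat.cast_nonneg m)]
        ring

/-- convex case, constant stepsize, averaged iterates. -/
theorem dsgd_stability_convex_averaged
    {H : Type*} [NormedAddCommGroup H] [InnerProductSpace ℝ H]
    {Z : Type*} (f : Z → H → ℝ) (f' : Z → H → H)
    (L β : ℝ) (hL : 0 < L) (hβ : 0 < β)
    (hdiff : ∀ (z : Z) (x : H), HasFDerivAt (f z) ((innerSL ℝ) (f' z x)) x)
    (hlip : ∀ (z : Z) (x y : H), |f z x - f z y| ≤ L * ‖x - y‖)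
    (hgradbd : ∀ (z : Z) (x : H), ‖f' z x‖ ≤ L)
    (hsmooth : ∀ (z : Z) (x y : H), ‖f' z x - f' z y‖ ≤ β * ‖x - y‖)
    (hconv : ∀ z : Z, ConvexOn ℝ Set.univ (f z))
    (m n T : ℕ) (hm : 1 ≤ m) (hn : 1 ≤ n) (hT : 1 ≤ T)
    (P : Fin m → Fin m → ℝ)
    (hPsym : ∀ i l, P i l = P l i)
    (hPpos : ∀ i l, 0 ≤ P i l)
    (hProw : ∀ i, ∑ l, P i l = 1)
    (lam : ℝ) (hlam0 : 0 ≤ lam) (hlam1 : lam < 1)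
    (hspec : ∀ vv : Fin m → H, ∑ i, vv i = 0 →
      Real.sqrt (∑ i, ‖∑ l, P i l • vv l‖ ^ 2) ≤ lam * Real.sqrt (∑ i, ‖vv i‖ ^ 2))
    (r : Fin m) (k : Fin n)
    (S S' : Fin m → Fin n → Z)
    (hSS' : ∀ (r' : Fin m) (k' : Fin n), (r', k') ≠ (r, k) → S' r' k' = S r' k')
    (j : ℕ → Fin m → Fin n)
    (η : ℝ) (hη0 : 0 < η) (hηβ : η ≤ 2 / β)
    (w₀ : H) (w v : ℕ → Fin m → H)
    (hw1 : ∀ i, w 1 i = w₀) (hv1 : ∀ i, v 1 i = w₀)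
    (hwrec : ∀ t, 1 ≤ t → t ≤ T → ∀ i,
      w (t + 1) i = ∑ l, P i l • w t l - η • f' (S i (j t i)) (w t i))
    (hvrec : ∀ t, 1 ≤ t → t ≤ T → ∀ i,
      v (t + 1) i = ∑ l, P i l • v t l - η • f' (S' i (j t i)) (v t i))
    :
    ∀ z : Z,
      |f z (((T : ℝ) + 1)⁻¹ • ∑ t ∈ Finset.Icc 1 (T + 1), (m : ℝ)⁻¹ • ∑ i, w t i) -
          f z (((T : ℝ) + 1)⁻¹ • ∑ t ∈ Finset.Icc 1 (T + 1), (m : ℝ)⁻¹ • ∑ i, v t i)| ≤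
        2 * η ^ 2 * β * L ^ 2 * T / (1 - lam)
          + 2 * η * L ^ 2 / (((T : ℝ) + 1) * m) *
            ∑ t ∈ Finset.Icc 1 T, ((T : ℝ) + 1 - (t : ℝ)) * (if j t r = k then (1 : ℝ) else 0) :=
  dsgd_stability_convex_averaged_general f f' L β hL hβ hdiff hlip hgradbd hsmooth hconv m n T hm P
    hPsym hProw lam hlam0 hlam1 hspec r k S S' hSS' j η hη0 hηβ w₀ w v hw1 hv1 hwrec hvrec
end

section
/- Assume f is L-Lipschitz and β-smooth (no convexity is assumed), P is a gossip matrix with spectral bound λ ∈ [0, 1), and η_t = η > 0 for all t. Then for every z ∈ 𝒵, |f(w̄^{T+1}; z) − f(v̄^{T+1}; z)| ≤ (4L²η/(1−λ)) (1 + βη)^T + (2L²η/m) ∑_{t=1}^T (1 + βη)^{T−t} 𝟙[j_t(r)=k]. -/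
/-!
Stability is measured in the summed (ℓ¹ over machines) distance `Dₜ = ∑ᵢ ‖wᵗ(i) − vᵗ(i)‖`.
A doubly stochastic gossip step does not increase this distance, a gradient step on a
shared sample increases it by at most the factor `1 + βη`, and only the single machine
that draws the differing sample can add `2Lη`. The discrete Grönwall inequality then bounds
`D_{T+1}`, and `L`-Lipschitzness transfers the bound to the averaged iterates. This already
gives the second term; the first one is nonnegative slack.
-/

open Finset

theorem le_sum_Icc_pow_mul_of_le_mul_add {u b : ℕ → ℝ} {c : ℝ} (hc : 0 ≤ c) (h₁ : u 1 ≤ 0) :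
    ∀ {T : ℕ}, (∀ t, 1 ≤ t → t ≤ T → u (t + 1) ≤ c * u t + b t) →
      u (T + 1) ≤ ∑ s ∈ Icc 1 T, c ^ (T - s) * b s
  | 0, _ => by simpa using h₁
  | T + 1, hstep => by
    have ih := le_sum_Icc_pow_mul_of_le_mul_add hc h₁ fun t ht₁ ht =>
      hstep t ht₁ (ht.trans T.le_succ)
    have hpow : ∀ s ∈ Icc 1 T, c ^ (T + 1 - s) * b s = c * (c ^ (T - s) * b s) := by
      intro s hs
      rw [Nat.sub_add_comm (mem_Icc.mp hs).2, pow_succ]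
      ring
    rw [sum_Icc_succ_top (by omega), sum_congr rfl hpow, ← mul_sum, Nat.sub_self, pow_zero, one_mul]
    calc u (T + 1 + 1) ≤ c * u (T + 1) + b (T + 1) := hstep (T + 1) (by omega) le_rfl
      _ ≤ c * ∑ s ∈ Icc 1 T, c ^ (T - s) * b s + b (T + 1) := by gcongr

section Gossip

variable {ι E : Type*} [Fintype ι] [NormedAddCommGroup E] [NormedSpace ℝ E]

theorem sum_norm_sum_smul_le_of_colSum_eq_one {P : ι → ι → ℝ} (hP : ∀ i l, 0 ≤ P i l)
    (hcol : ∀ l, ∑ i, P i l = 1) (x : ι → E) :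
    ∑ i, ‖∑ l, P i l • x l‖ ≤ ∑ l, ‖x l‖ :=
  calc ∑ i, ‖∑ l, P i l • x l‖ ≤ ∑ i, ∑ l, P i l * ‖x l‖ := by
        gcongr with i
        refine (norm_sum_le _ _).trans_eq (sum_congr rfl fun l _ => ?_)
        rw [norm_smul, Real.norm_of_nonneg (hP i l)]
    _ = ∑ l, ‖x l‖ := by rw [sum_comm]; simp [← sum_mul, hcol]

theorem sum_norm_gossip_step_sub_le {P : ι → ι → ℝ} (hP : ∀ i l, 0 ≤ P i l)
    (hcol : ∀ l, ∑ i, P i l = 1) {η : ℝ} (hη : 0 ≤ η) (x y g h : ι → E) :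
    ∑ i, ‖(∑ l, P i l • x l - η • g i) - (∑ l, P i l • y l - η • h i)‖ ≤
      ∑ i, ‖x i - y i‖ + η * ∑ i, ‖g i - h i‖ :=
  calc ∑ i, ‖(∑ l, P i l • x l - η • g i) - (∑ l, P i l • y l - η • h i)‖
      = ∑ i, ‖∑ l, P i l • (x l - y l) - η • (g i - h i)‖ := by
        simp only [smul_sub, sum_sub_distrib, sub_sub_sub_comm]
    _ ≤ ∑ i, (‖∑ l, P i l • (x l - y l)‖ + η * ‖g i - h i‖) := by
        gcongr with i
        refine (norm_sub_le _ _).trans_eq ?_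
        rw [norm_smul, Real.norm_of_nonneg hη]
    _ ≤ ∑ i, ‖x i - y i‖ + η * ∑ i, ‖g i - h i‖ := by
        rw [sum_add_distrib, ← mul_sum]
        gcongr ?_ + _
        exact sum_norm_sum_smul_le_of_colSum_eq_one hP hcol fun l => x l - y l

end Gossip

section SampleSwap

variable {ι κ Z E : Type*} [Fintype ι] [DecidableEq κ] [NormedAddCommGroup E]
  {f' : Z → E → E} {L β : ℝ} {S S' : ι → κ → Z} {r : ι} {k : κ}

theorem sum_norm_grad_swap_le (hbd : ∀ z x, ‖f' z x‖ ≤ L)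
    (hSS' : ∀ r' k', (r', k') ≠ (r, k) → S' r' k' = S r' k') (j : ι → κ) (x : ι → E) :
    ∑ i, ‖f' (S i (j i)) (x i) - f' (S' i (j i)) (x i)‖ ≤ 2 * L * if j r = k then 1 else 0 := by
  have hsame : ∀ i, (i, j i) ≠ (r, k) → S' i (j i) = S i (j i) := fun i => hSS' i (j i)
  rw [sum_eq_single r fun i _ hi => by simp [hsame i (by simp [hi])]]
  · split_ifs with hjr
    · linarith [norm_sub_le (f' (S r (j r)) (x r)) (f' (S' r (j r)) (x r)),
        hbd (S r (j r)) (x r), hbd (S' r (j r)) (x r)]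
    · simp [hsame r (by simp [hjr])]
  · simp

theorem sum_norm_grad_sub_le (hbd : ∀ z x, ‖f' z x‖ ≤ L)
    (hsmooth : ∀ z x y, ‖f' z x - f' z y‖ ≤ β * ‖x - y‖)
    (hSS' : ∀ r' k', (r', k') ≠ (r, k) → S' r' k' = S r' k') (j : ι → κ) (x y : ι → E) :
    ∑ i, ‖f' (S i (j i)) (x i) - f' (S' i (j i)) (y i)‖ ≤
      β * ∑ i, ‖x i - y i‖ + 2 * L * if j r = k then 1 else 0 :=
  calc ∑ i, ‖f' (S i (j i)) (x i) - f' (S' i (j i)) (y i)‖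
      ≤ ∑ i, (‖f' (S i (j i)) (x i) - f' (S' i (j i)) (x i)‖ + β * ‖x i - y i‖) := by
        gcongr with i
        exact (norm_sub_le_norm_sub_add_norm_sub _ _ _).trans (by gcongr; exact hsmooth _ _ _)
    _ ≤ β * ∑ i, ‖x i - y i‖ + 2 * L * if j r = k then 1 else 0 := by
        rw [sum_add_distrib, ← mul_sum, add_comm]
        gcongr
        exact sum_norm_grad_swap_le hbd hSS' j x

end SampleSwap

theorem norm_smul_sum_sub_smul_sum_le {ι E : Type*} [Fintype ι] [NormedAddCommGroup E]
    [NormedSpace ℝ E] {a : ℝ} (ha : 0 ≤ a) (x y : ι → E) :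
    ‖a • ∑ i, x i - a • ∑ i, y i‖ ≤ a * ∑ i, ‖x i - y i‖ := by
  rw [← smul_sub, ← sum_sub_distrib, norm_smul, Real.norm_of_nonneg ha]
  gcongr
  exact norm_sum_le _ _

theorem dsgd_stability_nonconvex_constant_step_general
    {H : Type*} [NormedAddCommGroup H] [InnerProductSpace ℝ H]
    {Z : Type*} (f : Z → H → ℝ) (f' : Z → H → H)
    (L β : ℝ) (hβ : 0 < β)
    (hlip : ∀ (z : Z) (x y : H), |f z x - f z y| ≤ L * ‖x - y‖)
    (hgradbd : ∀ (z : Z) (x : H), ‖f' z x‖ ≤ L)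
    (hsmooth : ∀ (z : Z) (x y : H), ‖f' z x - f' z y‖ ≤ β * ‖x - y‖)
    (m n T : ℕ)
    (P : Fin m → Fin m → ℝ)
    (hPsym : ∀ i l, P i l = P l i)
    (hPpos : ∀ i l, 0 ≤ P i l)
    (hProw : ∀ i, ∑ l, P i l = 1)
    (lam : ℝ) (hlam1 : lam < 1)
    (r : Fin m) (k : Fin n)
    (S S' : Fin m → Fin n → Z)
    (hSS' : ∀ (r' : Fin m) (k' : Fin n), (r', k') ≠ (r, k) → S' r' k' = S r' k')
    (j : ℕ → Fin m → Fin n)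
    (η : ℝ) (hη0 : 0 < η)
    (w₀ : H) (w v : ℕ → Fin m → H)
    (hw1 : ∀ i, w 1 i = w₀) (hv1 : ∀ i, v 1 i = w₀)
    (hwrec : ∀ t, 1 ≤ t → t ≤ T → ∀ i,
      w (t + 1) i = ∑ l, P i l • w t l - η • f' (S i (j t i)) (w t i))
    (hvrec : ∀ t, 1 ≤ t → t ≤ T → ∀ i,
      v (t + 1) i = ∑ l, P i l • v t l - η • f' (S' i (j t i)) (v t i))
    :
    ∀ z : Z,
      |f z ((m : ℝ)⁻¹ • ∑ i, w (T + 1) i) - f z ((m : ℝ)⁻¹ • ∑ i, v (T + 1) i)| ≤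
        4 * L ^ 2 * η / (1 - lam) * (1 + β * η) ^ T
          + 2 * L ^ 2 * η / m * ∑ t ∈ Finset.Icc 1 T, (1 + β * η) ^ (T - t) * (if j t r = k then (1 : ℝ) else 0) := by
  intro z
  set χ : ℕ → ℝ := fun t => if j t r = k then 1 else 0
  set D : ℕ → ℝ := fun t => ∑ i, ‖w t i - v t i‖
  have hL : 0 ≤ L := (norm_nonneg _).trans (hgradbd z w₀)
  have hcol : ∀ l, ∑ i, P i l = 1 := fun l =>
    (sum_congr rfl fun i _ => hPsym i l).trans (hProw l)
  have hstep : ∀ t, 1 ≤ t → t ≤ T → D (t + 1) ≤ (1 + β * η) * D t + 2 * L * η * χ t := by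
    intro t ht₁ ht
    calc D (t + 1) ≤ D t + η * ∑ i, ‖f' (S i (j t i)) (w t i) - f' (S' i (j t i)) (v t i)‖ := by
          simp only [D, hwrec t ht₁ ht, hvrec t ht₁ ht]
          exact sum_norm_gossip_step_sub_le hPpos hcol hη0.le _ _ _ _
      _ ≤ D t + η * (β * D t + 2 * L * χ t) := by
          gcongr
          exact sum_norm_grad_sub_le hgradbd hsmooth hSS' (j t) (w t) (v t)
      _ = (1 + β * η) * D t + 2 * L * η * χ t := by ring
  have hD : D (T + 1) ≤ ∑ s ∈ Icc 1 T, (1 + β * η) ^ (T - s) * (2 * L * η * χ s) :=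
    le_sum_Icc_pow_mul_of_le_mul_add (by positivity) (by simp [D, hw1, hv1]) hstep
  have hslack : 0 ≤ 4 * L ^ 2 * η / (1 - lam) * (1 + β * η) ^ T := by
    have : 0 < 1 - lam := by linarith
    positivity
  calc |f z ((m : ℝ)⁻¹ • ∑ i, w (T + 1) i) - f z ((m : ℝ)⁻¹ • ∑ i, v (T + 1) i)|
      ≤ L * ((m : ℝ)⁻¹ * D (T + 1)) :=
        (hlip z _ _).trans (by gcongr; exact norm_smul_sum_sub_smul_sum_le (by positivity) _ _)
    _ ≤ L * ((m : ℝ)⁻¹ * ∑ s ∈ Icc 1 T, (1 + β * η) ^ (T - s) * (2 * L * η * χ s)) := by gcongr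
    _ = 2 * L ^ 2 * η / m * ∑ t ∈ Icc 1 T, (1 + β * η) ^ (T - t) * χ t := by
        simp only [mul_left_comm _ (2 * L * η), ← mul_sum]
        ring
    _ ≤ _ := le_add_of_nonneg_left hslack

/-- non-convex case, constant stepsize `η > 0`. -/
theorem dsgd_stability_nonconvex_constant_step
    {H : Type*} [NormedAddCommGroup H] [InnerProductSpace ℝ H]
    {Z : Type*} (f : Z → H → ℝ) (f' : Z → H → H)
    (L β : ℝ) (hL : 0 < L) (hβ : 0 < β)
    (hdiff : ∀ (z : Z) (x : H), HasFDerivAt (f z) ((innerSL ℝ) (f' z x)) x)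
    (hlip : ∀ (z : Z) (x y : H), |f z x - f z y| ≤ L * ‖x - y‖)
    (hgradbd : ∀ (z : Z) (x : H), ‖f' z x‖ ≤ L)
    (hsmooth : ∀ (z : Z) (x y : H), ‖f' z x - f' z y‖ ≤ β * ‖x - y‖)
    (m n T : ℕ) (hm : 1 ≤ m) (hn : 1 ≤ n) (hT : 1 ≤ T)
    (P : Fin m → Fin m → ℝ)
    (hPsym : ∀ i l, P i l = P l i)
    (hPpos : ∀ i l, 0 ≤ P i l)
    (hProw : ∀ i, ∑ l, P i l = 1)
    (lam : ℝ) (hlam0 : 0 ≤ lam) (hlam1 : lam < 1)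
    (hspec : ∀ vv : Fin m → H, ∑ i, vv i = 0 →
      Real.sqrt (∑ i, ‖∑ l, P i l • vv l‖ ^ 2) ≤ lam * Real.sqrt (∑ i, ‖vv i‖ ^ 2))
    (r : Fin m) (k : Fin n)
    (S S' : Fin m → Fin n → Z)
    (hSS' : ∀ (r' : Fin m) (k' : Fin n), (r', k') ≠ (r, k) → S' r' k' = S r' k')
    (j : ℕ → Fin m → Fin n)
    (η : ℝ) (hη0 : 0 < η)
    (w₀ : H) (w v : ℕ → Fin m → H)
    (hw1 : ∀ i, w 1 i = w₀) (hv1 : ∀ i, v 1 i = w₀)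
    (hwrec : ∀ t, 1 ≤ t → t ≤ T → ∀ i,
      w (t + 1) i = ∑ l, P i l • w t l - η • f' (S i (j t i)) (w t i))
    (hvrec : ∀ t, 1 ≤ t → t ≤ T → ∀ i,
      v (t + 1) i = ∑ l, P i l • v t l - η • f' (S' i (j t i)) (v t i))
    :
    ∀ z : Z,
      |f z ((m : ℝ)⁻¹ • ∑ i, w (T + 1) i) - f z ((m : ℝ)⁻¹ • ∑ i, v (T + 1) i)| ≤
        4 * L ^ 2 * η / (1 - lam) * (1 + β * η) ^ T
          + 2 * L ^ 2 * η / m * ∑ t ∈ Finset.Icc 1 T, (1 + β * η) ^ (T - t) * (if j t r = k then (1 : ℝ) else 0) :=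
  dsgd_stability_nonconvex_constant_step_general f f' L β hβ hlip hgradbd hsmooth m n T P hPsym
    hPpos hProw lam hlam1 r k S S' hSS' j η hη0 w₀ w v hw1 hv1 hwrec hvrec
end
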